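/- arXiv:2103.00724 — 4 statements merged into one kernel-verified Lean document; each statement's English description precedes it below -/
import Mathlib

section
/- Let G be a graph with minimum degree δ(G) ≥ 1 and let m ≥ 1 be an integer. Then the strength of the disjoint union of G with m isolated vertices equals the strength of G, i.e. str(G + mK₁) = str(G). -/
open Finset

/-- A numbering of a graph of order `Fintype.card V` is a bijection onto `{1, …, card V}`. -/
def IsNumbering {V : Type*} [Fintype V] (f : V → ℕ) : Prop :=
  Set.BijOn f Set.univ (Set.Icc 1 (Fintype.card V))

/-- The strength `str_f` of a numbering `f` of `G`: the maximum of `f u + f v` over edges. -/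
noncomputable def strOf {V : Type*} [Fintype V] (G : SimpleGraph V) (f : V → ℕ) : ℕ :=
  sSup {n | ∃ u v, G.Adj u v ∧ n = f u + f v}

/-- The strength of a graph: the minimum over all numberings `f` of `str_f`. -/
noncomputable def strength {V : Type*} [Fintype V] (G : SimpleGraph V) : ℕ :=
  sInf {n | ∃ f : V → ℕ, IsNumbering f ∧ strOf G f = n}

lemma exists_numbering_le {V : Type*} [Fintype V] {h : V → ℕ}
    (hinj : Function.Injective h) (h1 : ∀ v, 1 ≤ h v) :
    ∃ f : V → ℕ, IsNumbering f ∧ ∀ v, f v ≤ h v := by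
  classical
  have hcard : (Finset.univ.image h).card = Fintype.card V := by
    rw [Finset.card_image_of_injective _ hinj, Finset.card_univ]
  let e := (Finset.univ.image h).orderIsoOfFin hcard
  have hbase : ∀ i, 1 ≤ (e i : ℕ) := by
    intro i
    obtain ⟨v, -, hv⟩ := Finset.mem_image.1 (e i).2
    rw [← hv]; exact h1 v
  have key' : ∀ k, ∀ hk : k < Fintype.card V, k + 1 ≤ (e ⟨k, hk⟩ : ℕ) := by
    intro k
    induction k with
    | zero => intro hk; exact hbase _
    | succ n ih =>
      intro hk
      have hlt : (⟨n, Nat.lt_of_succ_lt hk⟩ : Fin _) < ⟨n + 1, hk⟩ := by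
        simp [Fin.lt_def]
      have h2 : (e ⟨n, Nat.lt_of_succ_lt hk⟩ : ℕ) < (e ⟨n + 1, hk⟩ : ℕ) :=
        Subtype.coe_lt_coe.mpr (e.strictMono hlt)
      have h3 := ih (Nat.lt_of_succ_lt hk)
      omega
  have key : ∀ i : Fin (Fintype.card V), (i : ℕ) + 1 ≤ (e i : ℕ) := fun i => key' i i.2
  have hmem : ∀ v, h v ∈ Finset.univ.image h := fun v =>
    Finset.mem_image_of_mem h (Finset.mem_univ v)
  refine ⟨fun v => (e.symm ⟨h v, hmem v⟩ : ℕ) + 1, ⟨?_, ?_, ?_⟩, ?_⟩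
  · -- MapsTo
    intro v _
    dsimp only
    rw [Set.mem_Icc]
    have := (e.symm ⟨h v, hmem v⟩).isLt
    omega
  · -- InjOn
    intro u _ v _ huv
    dsimp only at huv
    have h4 : e.symm ⟨h u, hmem u⟩ = e.symm ⟨h v, hmem v⟩ := Fin.ext (by omega)
    have h5 := e.symm.injective h4
    exact hinj (congrArg Subtype.val h5)
  · -- SurjOn
    intro k hk
    rw [Set.mem_Icc] at hk
    have hklt : k - 1 < Fintype.card V := by omega
    obtain ⟨v, -, hv⟩ := Finset.mem_image.1 (e ⟨k - 1, hklt⟩).2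
    refine ⟨v, Set.mem_univ v, ?_⟩
    dsimp only
    have h5 : (⟨h v, hmem v⟩ : {x // x ∈ Finset.univ.image h}) = e ⟨k - 1, hklt⟩ :=
      Subtype.ext hv
    rw [h5, OrderIso.symm_apply_apply]
    show (k - 1) + 1 = k
    omega
  · -- f ≤ h
    intro v
    have h6 : (e (e.symm ⟨h v, hmem v⟩) : ℕ) = h v :=
      congrArg Subtype.val (e.apply_symm_apply _)
    have h7 := key (e.symm ⟨h v, hmem v⟩)
    rw [h6] at h7
    exact h7

lemma exists_numbering (V : Type*) [Fintype V] : ∃ f : V → ℕ, IsNumbering f := by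
  classical
  have hinj : Function.Injective (fun v => (Fintype.equivFin V v : ℕ) + 1) := by
    intro a b hab
    have hab' : (Fintype.equivFin V a : ℕ) + 1 = (Fintype.equivFin V b : ℕ) + 1 := hab
    exact (Fintype.equivFin V).injective (Fin.ext (by omega))
  obtain ⟨f, hf, -⟩ := exists_numbering_le hinj (fun v => Nat.le_add_left 1 _)
  exact ⟨f, hf⟩

/-- If `δ(G) ≥ 1` and `m ≥ 1`, then `str(G + mK₁) = str(G)`. -/
theorem strength_sum_isolated {V : Type*} [Fintype V] (G : SimpleGraph V)
    [DecidableRel G.Adj] (hδ : 1 ≤ G.minDegree) (m : ℕ) (hm : 1 ≤ m) :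
    strength (G ⊕g (⊥ : SimpleGraph (Fin m))) = strength G := by
  classical
  have hcardsum : Fintype.card (V ⊕ Fin m) = Fintype.card V + m := by
    simp [Fintype.card_sum]
  apply le_antisymm
  · -- strength sum ≤ strength G
    have hne : {n | ∃ f : V → ℕ, IsNumbering f ∧ strOf G f = n}.Nonempty := by
      obtain ⟨f, hf⟩ := exists_numbering V
      exact ⟨strOf G f, f, hf, rfl⟩
    obtain ⟨f, hf, hstr⟩ := Nat.sInf_mem hne
    set g : V ⊕ Fin m → ℕ := Sum.elim f (fun i => Fintype.card V + 1 + i) with hgdef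
    have hgnum : IsNumbering g := by
      unfold IsNumbering
      rw [hcardsum]
      refine ⟨?_, ?_, ?_⟩
      · rintro (v | i) -
        · have := hf.1 (Set.mem_univ v)
          rw [Set.mem_Icc] at this ⊢
          show 1 ≤ f v ∧ f v ≤ _
          omega
        · rw [Set.mem_Icc]
          show 1 ≤ Fintype.card V + 1 + (i : ℕ) ∧ Fintype.card V + 1 + (i : ℕ) ≤ Fintype.card V + m
          have := i.isLt
          omega
      · rintro (u | i) - (v | j) - hab
        · exact congrArg Sum.inl (hf.2.1 (Set.mem_univ u) (Set.mem_univ v) hab)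
        · exfalso
          have h1 : f u ≤ Fintype.card V := (hf.1 (Set.mem_univ u)).2
          have h2 : g (Sum.inl u) = f u := rfl
          have h3 : g (Sum.inr j) = Fintype.card V + 1 + (j : ℕ) := rfl
          omega
        · exfalso
          have h1 : f v ≤ Fintype.card V := (hf.1 (Set.mem_univ v)).2
          have h2 : g (Sum.inl v) = f v := rfl
          have h3 : g (Sum.inr i) = Fintype.card V + 1 + (i : ℕ) := rfl
          omega
        · have h2 : g (Sum.inr i) = Fintype.card V + 1 + (i : ℕ) := rfl
          have h3 : g (Sum.inr j) = Fintype.card V + 1 + (j : ℕ) := rfl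
          exact congrArg Sum.inr (Fin.ext (by omega))
      · intro k hk
        rw [Set.mem_Icc] at hk
        by_cases hkN : k ≤ Fintype.card V
        · obtain ⟨v, -, hv⟩ := hf.2.2 (Set.mem_Icc.2 ⟨hk.1, hkN⟩)
          exact ⟨Sum.inl v, Set.mem_univ _, hv⟩
        · refine ⟨Sum.inr ⟨k - Fintype.card V - 1, by omega⟩, Set.mem_univ _, ?_⟩
          show Fintype.card V + 1 + (k - Fintype.card V - 1) = k
          omega
    have hsets : {n | ∃ u v, (G ⊕g (⊥ : SimpleGraph (Fin m))).Adj u v ∧ n = g u + g v} =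
        {n | ∃ u v, G.Adj u v ∧ n = f u + f v} := by
      ext n
      simp only [Set.mem_setOf_eq]
      constructor
      · rintro ⟨(u | i), (v | j), hadj, rfl⟩
        · exact ⟨u, v, hadj, rfl⟩
        · simp [SimpleGraph.sum_adj] at hadj
        · simp [SimpleGraph.sum_adj] at hadj
        · simp [SimpleGraph.sum_adj] at hadj
      · rintro ⟨u, v, hadj, rfl⟩
        exact ⟨Sum.inl u, Sum.inl v, hadj, rfl⟩
    have : strOf (G ⊕g (⊥ : SimpleGraph (Fin m))) g = strOf G f := by
      unfold strOf
      rw [hsets]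
    calc strength (G ⊕g (⊥ : SimpleGraph (Fin m)))
        ≤ strOf (G ⊕g (⊥ : SimpleGraph (Fin m))) g := Nat.sInf_le ⟨g, hgnum, rfl⟩
      _ = strOf G f := this
      _ = strength G := hstr
  · -- strength G ≤ strength sum
    have hne2 : {n | ∃ f : V ⊕ Fin m → ℕ, IsNumbering f ∧
        strOf (G ⊕g (⊥ : SimpleGraph (Fin m))) f = n}.Nonempty := by
      obtain ⟨f, hf⟩ := exists_numbering (V ⊕ Fin m)
      exact ⟨_, f, hf, rfl⟩
    obtain ⟨g, hg, hstr⟩ := Nat.sInf_mem hne2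
    have hinj : Function.Injective (fun v => g (Sum.inl v)) := fun a b hab =>
      Sum.inl.inj (hg.2.1 (Set.mem_univ _) (Set.mem_univ _) hab)
    have h1 : ∀ v, 1 ≤ g (Sum.inl v) := fun v => (hg.1 (Set.mem_univ _)).1
    obtain ⟨f, hf, hle⟩ := exists_numbering_le hinj h1
    have hbdd : BddAbove {n | ∃ u v, (G ⊕g (⊥ : SimpleGraph (Fin m))).Adj u v ∧
        n = g u + g v} := by
      refine ⟨2 * Fintype.card (V ⊕ Fin m), ?_⟩
      rintro n ⟨u, v, -, rfl⟩
      have hu := (hg.1 (Set.mem_univ u)).2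
      have hv := (hg.1 (Set.mem_univ v)).2
      omega
    have hle2 : strOf G f ≤ strOf (G ⊕g (⊥ : SimpleGraph (Fin m))) g := by
      unfold strOf
      rcases Set.eq_empty_or_nonempty {n | ∃ u v, G.Adj u v ∧ n = f u + f v} with hemp | hne3
      · rw [hemp, csSup_empty]
        exact Nat.zero_le _
      · refine csSup_le hne3 ?_
        rintro n ⟨u, v, hadj, rfl⟩
        refine le_trans (add_le_add (hle u) (hle v)) ?_
        exact le_csSup hbdd ⟨Sum.inl u, Sum.inl v, hadj, rfl⟩
    calc strength G ≤ strOf G f := Nat.sInf_le ⟨f, hf, rfl⟩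
      _ ≤ strOf (G ⊕g (⊥ : SimpleGraph (Fin m))) g := hle2
      _ = strength (G ⊕g (⊥ : SimpleGraph (Fin m))) := hstr
end

section
/- Let G be a graph of order p with p − 2 ≥ δ(G) ≥ 1. If there exists a δ-sequence {𝒢_i}_{i=1}^s of G such that z̃_i = Σ_{j=2}^i (m_j + 1 − δ_j) ≥ 0 for all 2 ≤ i ≤ s, then str(G) = p + δ(G). -/
open Finset

open scoped Classical

/-- Degree of `v` inside the induced subgraph on `S`. -/
noncomputable def degIn {V : Type*} (G : SimpleGraph V) (S : Finset V) (v : V) : ℕ :=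
  (S.filter fun w => G.Adj v w).card

/-- The isolated vertices of the induced subgraph on `S`. -/
noncomputable def isolSet {V : Type*} (G : SimpleGraph V) (S : Finset V) : Finset V :=
  S.filter fun v => ∀ w ∈ S, ¬ G.Adj v w

/-- The non-isolated part of the induced subgraph on `S`. -/
noncomputable def core {V : Type*} (G : SimpleGraph V) (S : Finset V) : Finset V :=
  S \ isolSet G S

/-- The induced subgraph on `S` is terminal iff it is of the form `mK₁` with `m ≥ 1`, or
`mK₁ + K_r` with `m ≥ 0`, `r ≥ 2`. -/
def Terminal {V : Type*} (G : SimpleGraph V) (S : Finset V) : Prop :=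
  (core G S = ∅ ∧ S.Nonempty) ∨
    (2 ≤ (core G S).card ∧ ∀ v ∈ core G S, ∀ w ∈ core G S, v ≠ w → G.Adj v w)

/-- A d-sequence `𝒢₁, …, 𝒢ₛ` of `G`: `𝒢ᵢ` is the induced subgraph of `G` on `S i`
(so `𝒢ᵢ = mᵢK₁ + Gᵢ` where `Gᵢ` is induced on `core G (S i)`), `𝒢₁ = G`, and as long as
`𝒢ᵢ` is not terminal, `𝒢_{i+1}` is obtained from `Gᵢ` by deleting the chosen vertex `u i`
together with all of its neighbors. -/
structure DSeq {V : Type*} [Fintype V] (G : SimpleGraph V) where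
  s : ℕ
  hs : 1 ≤ s
  S : ℕ → Finset V
  u : ℕ → V
  first : S 1 = Finset.univ
  mem_u : ∀ i, 1 ≤ i → i < s → u i ∈ core G (S i)
  not_terminal : ∀ i, 1 ≤ i → i < s → ¬ Terminal G (S i)
  step : ∀ i, 1 ≤ i → i < s →
    S (i + 1) = (core G (S i)).filter fun w => w ≠ u i ∧ ¬ G.Adj (u i) w
  terminal : Terminal G (S s)

namespace DSeq

variable {V : Type*} [Fintype V] {G : SimpleGraph V}

/-- `mᵢ`, the number of isolated vertices of `𝒢ᵢ`. -/
noncomputable def m (D : DSeq G) (i : ℕ) : ℕ := (isolSet G (D.S i)).card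

/-- `dᵢ`, the degree in `Gᵢ` of the deleted vertex `u i` (for `i < s`); at the terminal
index it is the minimum degree of `Gₛ` (so `0` if `𝒢ₛ = mₛK₁`, and `r - 1` if `Gₛ = K_r`). -/
noncomputable def d (D : DSeq G) (i : ℕ) : ℕ :=
  if i < D.s then degIn G (D.S i) (D.u i)
  else if h : (core G (D.S i)).Nonempty then (core G (D.S i)).inf' h (degIn G (D.S i)) else 0

/-- The partial sums `z_i = Σ_{j=2}^i (m_j + 1 - d_j)`. -/
noncomputable def z (D : DSeq G) (i : ℕ) : ℤ :=
  ∑ j ∈ Finset.Icc 2 i, ((D.m j : ℤ) + 1 - (D.d j : ℤ))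

/-- A δ-sequence is a d-sequence in which every chosen vertex has minimum degree in `Gᵢ`. -/
def IsDeltaSeq (D : DSeq G) : Prop :=
  ∀ i, 1 ≤ i → i < D.s → ∀ w ∈ core G (D.S i), degIn G (D.S i) (D.u i) ≤ degIn G (D.S i) w

end DSeq


namespace StrengthAux

set_option linter.unusedSectionVars false
set_option maxHeartbeats 1000000

variable {V : Type*} [Fintype V] {G : SimpleGraph V} [DecidableRel G.Adj] (D : DSeq G)

lemma mem_isolSet {S : Finset V} {v : V} :
    v ∈ isolSet G S ↔ v ∈ S ∧ ∀ w ∈ S, ¬ G.Adj v w := by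
  simp [isolSet]

lemma mem_core {S : Finset V} {v : V} :
    v ∈ core G S ↔ v ∈ S ∧ ¬ v ∈ isolSet G S := by
  simp [core]

noncomputable def nbrs (i : ℕ) : Finset V := (D.S i).filter (fun w => G.Adj (D.u i) w)

lemma mem_nbrs {i : ℕ} {w : V} : w ∈ nbrs D i ↔ w ∈ D.S i ∧ G.Adj (D.u i) w := by
  simp [nbrs]

noncomputable def sig (i : ℕ) : ℕ := ∑ j ∈ Finset.Icc 1 i, (nbrs D j).card

noncomputable def beta (i : ℕ) : ℕ := ∑ j ∈ Finset.Icc 1 i, (D.m j + 1)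

lemma sig_mono {i j : ℕ} (h : i ≤ j) : sig D i ≤ sig D j :=
  Finset.sum_le_sum_of_subset (Finset.Icc_subset_Icc_right h)

lemma beta_mono {i j : ℕ} (h : i ≤ j) : beta D i ≤ beta D j :=
  Finset.sum_le_sum_of_subset (Finset.Icc_subset_Icc_right h)

lemma sig_succ (i : ℕ) : sig D (i+1) = sig D i + (nbrs D (i+1)).card := by
  rw [sig, sig, ← Finset.sum_Icc_succ_top (by omega : 1 ≤ i + 1)]

lemma beta_succ (i : ℕ) : beta D (i+1) = beta D i + (D.m (i+1) + 1) := by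
  rw [beta, beta, ← Finset.sum_Icc_succ_top (by omega : 1 ≤ i + 1)]

lemma isolSet_subset (S : Finset V) : isolSet G S ⊆ S := fun v hv => (mem_isolSet.1 hv).1

lemma core_subset (S : Finset V) : core G S ⊆ S := Finset.sdiff_subset

lemma S_succ_subset {i : ℕ} (h1 : 1 ≤ i) (h2 : i < D.s) : D.S (i+1) ⊆ D.S i := by
  intro w hw
  rw [D.step i h1 h2] at hw
  simp only [Finset.mem_filter] at hw
  exact core_subset _ hw.1

lemma S_anti {j i : ℕ} (hj : 1 ≤ j) (hji : j ≤ i) (hi : i ≤ D.s) : D.S i ⊆ D.S j := by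
  induction i, hji using Nat.le_induction with
  | base => exact Finset.Subset.refl _
  | succ n hn ih =>
    exact (S_succ_subset D (hj.trans hn) (by omega)).trans (ih (by omega))

lemma u_mem_S {i : ℕ} (h1 : 1 ≤ i) (h2 : i < D.s) : D.u i ∈ D.S i :=
  core_subset _ (D.mem_u i h1 h2)

lemma nbrs_subset (i : ℕ) : nbrs D i ⊆ D.S i := Finset.filter_subset _ _

lemma not_adj_of_mem_succ {i : ℕ} (h1 : 1 ≤ i) (h2 : i < D.s) {w : V}
    (hw : w ∈ D.S (i+1)) : ¬ G.Adj (D.u i) w := by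
  rw [D.step i h1 h2] at hw
  simp only [Finset.mem_filter] at hw
  exact hw.2.2

lemma ne_u_of_mem_succ {i : ℕ} (h1 : 1 ≤ i) (h2 : i < D.s) {w : V}
    (hw : w ∈ D.S (i+1)) : w ≠ D.u i := by
  rw [D.step i h1 h2] at hw
  simp only [Finset.mem_filter] at hw
  exact hw.2.1

lemma isol_not_adj {i : ℕ} {v w : V} (hv : v ∈ isolSet G (D.S i)) (hw : w ∈ D.S i) :
    ¬ G.Adj v w :=
  (mem_isolSet.1 hv).2 w hw

lemma S_succ_eq {i : ℕ} (h1 : 1 ≤ i) (h2 : i < D.s) :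
    D.S (i+1) = D.S i \ (isolSet G (D.S i) ∪ {D.u i} ∪ nbrs D i) := by
  rw [D.step i h1 h2]
  ext w
  simp only [Finset.mem_filter, Finset.mem_sdiff, Finset.mem_union, Finset.mem_singleton,
    mem_core, mem_nbrs, core, Finset.mem_sdiff]
  tauto

lemma card_S_step {i : ℕ} (h1 : 1 ≤ i) (h2 : i < D.s) :
    (D.S i).card = (D.S (i+1)).card + (D.m i + 1 + (nbrs D i).card) := by
  have hu : D.u i ∈ D.S i := u_mem_S D h1 h2
  have hX : isolSet G (D.S i) ∪ {D.u i} ∪ nbrs D i ⊆ D.S i := by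
    refine Finset.union_subset (Finset.union_subset ?_ ?_) (nbrs_subset D i)
    · exact isolSet_subset _
    · simpa using hu
  have hd1 : Disjoint (isolSet G (D.S i)) {D.u i} := by
    rw [Finset.disjoint_singleton_right]
    have := D.mem_u i h1 h2
    rw [mem_core] at this
    exact this.2
  have hd2 : Disjoint (isolSet G (D.S i) ∪ {D.u i}) (nbrs D i) := by
    rw [Finset.disjoint_left]
    intro w hw hwn
    rw [mem_nbrs] at hwn
    rcases Finset.mem_union.1 hw with h | h
    · exact (isol_not_adj D h hu) hwn.2.symm
    · rw [Finset.mem_singleton] at h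
      subst h
      exact G.irrefl hwn.2
  have hkey : (D.S i \ (isolSet G (D.S i) ∪ {D.u i} ∪ nbrs D i)).card
      + (isolSet G (D.S i) ∪ {D.u i} ∪ nbrs D i).card = (D.S i).card :=
    Finset.card_sdiff_add_card_eq_card hX
  rw [← S_succ_eq D h1 h2] at hkey
  rw [Finset.card_union_of_disjoint hd2, Finset.card_union_of_disjoint hd1,
    Finset.card_singleton] at hkey
  rw [DSeq.m]
  omega

lemma card_run : ∀ i, i + 1 ≤ D.s →
    Fintype.card V = sig D i + beta D i + (D.S (i+1)).card := by
  intro i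
  induction i with
  | zero =>
    intro _
    simp [sig, beta, D.first]
  | succ n ih =>
    intro h
    have hn : n + 1 ≤ D.s := by omega
    have := card_S_step D (by omega : 1 ≤ n + 1) (by omega : n + 1 < D.s)
    rw [ih hn, sig_succ, beta_succ] at *
    omega

lemma card_eq : Fintype.card V = sig D (D.s - 1) + beta D (D.s - 1) + (D.S D.s).card := by
  have h := card_run D (D.s - 1) (by have := D.hs; omega)
  have : D.s - 1 + 1 = D.s := by have := D.hs; omega
  rwa [this] at h

/- ========== stage and class ========== -/

noncomputable def stage (v : V) : ℕ :=
  ((Finset.Icc 1 D.s).filter (fun i => v ∈ D.S i)).max'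
    ⟨1, by simp [Finset.mem_filter, Finset.mem_Icc, D.hs, D.first]⟩

lemma stage_mem (v : V) :
    stage D v ∈ (Finset.Icc 1 D.s).filter (fun i => v ∈ D.S i) := Finset.max'_mem _ _

lemma one_le_stage (v : V) : 1 ≤ stage D v := by
  have := stage_mem D v
  simp only [Finset.mem_filter, Finset.mem_Icc] at this
  exact this.1.1

lemma stage_le (v : V) : stage D v ≤ D.s := by
  have := stage_mem D v
  simp only [Finset.mem_filter, Finset.mem_Icc] at this
  exact this.1.2

lemma mem_S_stage (v : V) : v ∈ D.S (stage D v) := by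
  have := stage_mem D v
  simp only [Finset.mem_filter, Finset.mem_Icc] at this
  exact this.2

lemma le_stage {i : ℕ} {v : V} (h1 : 1 ≤ i) (h2 : i ≤ D.s) (hv : v ∈ D.S i) :
    i ≤ stage D v :=
  Finset.le_max' _ _ (by simp only [Finset.mem_filter, Finset.mem_Icc]; exact ⟨⟨h1, h2⟩, hv⟩)

lemma mem_S_of_le_stage {i : ℕ} {v : V} (h1 : 1 ≤ i) (h : i ≤ stage D v) : v ∈ D.S i :=
  S_anti D h1 h (stage_le D v) (mem_S_stage D v)

lemma stage_eq {i : ℕ} {v : V} (h1 : 1 ≤ i) (h2 : i < D.s)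
    (hv : v ∈ D.S i) (hv' : v ∉ D.S (i+1)) : stage D v = i := by
  have hle := le_stage D h1 (le_of_lt h2) hv
  by_contra hne
  have : i + 1 ≤ stage D v := by omega
  exact hv' (mem_S_of_le_stage D (by omega) this)

noncomputable def cls (v : V) : ℕ :=
  if stage D v = D.s then (if v ∈ isolSet G (D.S D.s) then D.s + 1 else D.s)
  else if v ∈ isolSet G (D.S (stage D v)) then 3 * D.s - 2 * stage D v + 1
  else if v = D.u (stage D v) then 3 * D.s - 2 * stage D v
  else stage D v

lemma cls_nbrs {i : ℕ} {v : V} (h1 : 1 ≤ i) (h2 : i < D.s) (hv : v ∈ nbrs D i) :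
    cls D v = i := by
  obtain ⟨hvS, hadj⟩ := (mem_nbrs D).1 hv
  have hst : stage D v = i := by
    refine stage_eq D h1 h2 hvS (fun hmem => ?_)
    exact not_adj_of_mem_succ D h1 h2 hmem hadj
  have hni : v ∉ isolSet G (D.S i) := fun hiso =>
    isol_not_adj D hiso (u_mem_S D h1 h2) hadj.symm
  have hne : v ≠ D.u i := fun h => G.irrefl (h ▸ hadj)
  rw [cls, hst, if_neg (by omega), if_neg hni, if_neg hne]

lemma cls_u {i : ℕ} (h1 : 1 ≤ i) (h2 : i < D.s) :
    cls D (D.u i) = 3 * D.s - 2 * i := by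
  have hst : stage D (D.u i) = i := by
    refine stage_eq D h1 h2 (u_mem_S D h1 h2) (fun hmem => ?_)
    exact ne_u_of_mem_succ D h1 h2 hmem rfl
  have hni : D.u i ∉ isolSet G (D.S i) := (mem_core.1 (D.mem_u i h1 h2)).2
  rw [cls, hst, if_neg (by omega), if_neg hni, if_pos rfl]

lemma cls_isol {i : ℕ} {v : V} (h1 : 1 ≤ i) (h2 : i ≤ D.s) (hv : v ∈ isolSet G (D.S i)) :
    cls D v = 3 * D.s - 2 * i + 1 := by
  have hvS : v ∈ D.S i := isolSet_subset _ hv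
  have hst : stage D v = i := by
    rcases eq_or_lt_of_le h2 with he | hlt
    · subst he
      exact le_antisymm (stage_le D v) (le_stage D h1 (le_refl _) hvS)
    · refine stage_eq D h1 hlt hvS (fun hmem => ?_)
      rw [S_succ_eq D h1 hlt, Finset.mem_sdiff] at hmem
      exact hmem.2 (Finset.mem_union_left _ (Finset.mem_union_left _ hv))
  by_cases hi : i = D.s
  · subst hi
    rw [cls, if_pos hst, if_pos (hst ▸ hv)]
    omega
  · rw [cls, hst, if_neg hi, if_pos hv]

lemma cls_core_s {v : V} (hv : v ∈ core G (D.S D.s)) : cls D v = D.s := by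
  have hvS : v ∈ D.S D.s := core_subset _ hv
  have hst : stage D v = D.s :=
    le_antisymm (stage_le D v) (le_stage D D.hs (le_refl _) hvS)
  rw [cls, if_pos hst, if_neg (mem_core.1 hv).2]

lemma classify (v : V) :
    (∃ i, 1 ≤ i ∧ i < D.s ∧ v ∈ nbrs D i) ∨ v ∈ core G (D.S D.s) ∨
    (∃ i, 1 ≤ i ∧ i ≤ D.s ∧ v ∈ isolSet G (D.S i)) ∨
    (∃ i, 1 ≤ i ∧ i < D.s ∧ v = D.u i) := by
  set i := stage D v with hi
  have h1 : 1 ≤ i := one_le_stage D v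
  have h2 : i ≤ D.s := stage_le D v
  have hvS : v ∈ D.S i := mem_S_stage D v
  rcases eq_or_lt_of_le h2 with he | hlt
  · by_cases hiso : v ∈ isolSet G (D.S D.s)
    · exact Or.inr (Or.inr (Or.inl ⟨D.s, D.hs, le_refl _, hiso⟩))
    · exact Or.inr (Or.inl (mem_core.2 ⟨he ▸ hvS, hiso⟩))
  · have hv' : v ∉ D.S (i+1) := by
      intro hmem
      have := le_stage D (by omega) (by omega) hmem
      omega
    rw [S_succ_eq D h1 hlt, Finset.mem_sdiff] at hv'
    have hX : v ∈ isolSet G (D.S i) ∪ {D.u i} ∪ nbrs D i := by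
      by_contra hc
      exact hv' ⟨hvS, hc⟩
    rcases Finset.mem_union.1 hX with hX | hX
    · rcases Finset.mem_union.1 hX with hX | hX
      · exact Or.inr (Or.inr (Or.inl ⟨i, h1, h2, hX⟩))
      · exact Or.inr (Or.inr (Or.inr ⟨i, h1, hlt, Finset.mem_singleton.1 hX⟩))
    · exact Or.inl ⟨i, h1, hlt, hX⟩
/- ========== key and label ========== -/

noncomputable def key (v : V) : ℕ :=
  (Fintype.equivFin V v : ℕ) + cls D v * Fintype.card V

lemma key_lt_key {v w : V} (h : cls D v < cls D w) : key D v < key D w := by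
  have hv : (Fintype.equivFin V v : ℕ) < Fintype.card V := (Fintype.equivFin V v).2
  have hm : (cls D v + 1) * Fintype.card V ≤ cls D w * Fintype.card V :=
    Nat.mul_le_mul_right _ h
  have he : (cls D v + 1) * Fintype.card V = cls D v * Fintype.card V + Fintype.card V := by
    ring
  rw [key, key]
  omega

lemma key_inj : Function.Injective (key D) := by
  intro v w h
  have hv : (Fintype.equivFin V v : ℕ) < Fintype.card V := (Fintype.equivFin V v).2
  have hw : (Fintype.equivFin V w : ℕ) < Fintype.card V := (Fintype.equivFin V w).2
  have hcls : cls D v = cls D w := by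
    by_contra hne
    rcases lt_or_gt_of_ne hne with hlt | hlt
    · exact absurd h (ne_of_lt (key_lt_key D hlt))
    · exact absurd h.symm (ne_of_lt (key_lt_key D hlt))
  rw [key, key, hcls] at h
  have : (Fintype.equivFin V v : ℕ) = (Fintype.equivFin V w : ℕ) := by omega
  exact (Fintype.equivFin V).injective (Fin.ext this)

noncomputable def lab (v : V) : ℕ :=
  (Finset.univ.filter (fun w => key D w ≤ key D v)).card

lemma lab_lt_lab {v w : V} (h : key D v < key D w) : lab D v < lab D w := by
  apply Finset.card_lt_card
  rw [Finset.ssubset_iff_of_subset]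
  · exact ⟨w, by simp, by simp; omega⟩
  · intro x hx
    simp only [Finset.mem_filter, Finset.mem_univ, true_and] at hx ⊢
    omega

lemma lab_inj : Function.Injective (lab D) := by
  intro v w h
  by_contra hne
  have hk : key D v ≠ key D w := fun hk => hne (key_inj D hk)
  rcases lt_or_gt_of_ne hk with hlt | hlt
  · exact absurd h (ne_of_lt (lab_lt_lab D hlt))
  · exact absurd h.symm (ne_of_lt (lab_lt_lab D hlt))

lemma one_le_lab (v : V) : 1 ≤ lab D v := by
  rw [lab, Nat.one_le_iff_ne_zero, ← Nat.pos_iff_ne_zero, Finset.card_pos]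
  exact ⟨v, by simp⟩

lemma lab_le_card (v : V) : lab D v ≤ Fintype.card V := by
  rw [lab, ← Finset.card_univ]
  exact Finset.card_filter_le _ _

lemma lab_image : Finset.univ.image (lab D) = Finset.Icc 1 (Fintype.card V) := by
  apply Finset.eq_of_subset_of_card_le
  · intro x hx
    rw [Finset.mem_image] at hx
    obtain ⟨v, _, rfl⟩ := hx
    rw [Finset.mem_Icc]
    exact ⟨one_le_lab D v, lab_le_card D v⟩
  · rw [Nat.card_Icc, Finset.card_image_of_injective _ (lab_inj D), Finset.card_univ]
    omega

lemma isNumbering_lab : IsNumbering (lab D) := by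
  refine ⟨?_, ?_, ?_⟩
  · intro v _
    exact ⟨one_le_lab D v, lab_le_card D v⟩
  · intro v _ w _ h
    exact lab_inj D h
  · intro y hy
    have : y ∈ Finset.Icc 1 (Fintype.card V) := Finset.mem_Icc.2 ⟨hy.1, hy.2⟩
    rw [← lab_image D, Finset.mem_image] at this
    obtain ⟨v, _, rfl⟩ := this
    exact ⟨v, Set.mem_univ v, rfl⟩

lemma lab_le_of_cls (v : V) :
    lab D v ≤ (Finset.univ.filter (fun w => cls D w ≤ cls D v)).card := by
  apply Finset.card_le_card
  intro w hw
  simp only [Finset.mem_filter, Finset.mem_univ, true_and] at hw ⊢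
  by_contra hc
  exact absurd hw (not_le.2 (key_lt_key D (by omega)))
/- ========== label upper bounds per class ========== -/

lemma card_fam {i : ℕ} (h2 : i < D.s) :
    ((Finset.Icc 1 i).biUnion (fun j => isolSet G (D.S j) ∪ {D.u j})).card = beta D i := by
  rw [Finset.card_biUnion, beta]
  · apply Finset.sum_congr rfl
    intro j hj
    rw [Finset.mem_Icc] at hj
    have hu : D.u j ∉ isolSet G (D.S j) := (mem_core.1 (D.mem_u j hj.1 (by omega))).2
    rw [Finset.card_union_of_disjoint (Finset.disjoint_singleton_right.2 hu),
      Finset.card_singleton, DSeq.m]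
  · intro j hj j' hj' hne
    rw [Finset.mem_coe, Finset.mem_Icc] at hj hj'
    rw [Function.onFun, Finset.disjoint_left]
    intro w hw hw'
    have h3 : ∀ k, 1 ≤ k → k ≤ i → w ∈ isolSet G (D.S k) ∪ {D.u k} →
        cls D w = 3 * D.s - 2 * k + 1 ∨ cls D w = 3 * D.s - 2 * k := by
      intro k hk1 hk2 hwk
      rcases Finset.mem_union.1 hwk with h | h
      · exact Or.inl (cls_isol D hk1 (by omega) h)
      · rw [Finset.mem_singleton] at h
        subst h
        exact Or.inr (cls_u D hk1 (by omega))
    have e1 := h3 j hj.1 hj.2 hw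
    have e2 := h3 j' hj'.1 hj'.2 hw'
    have hjs : j ≤ i := hj.2
    have hjs' : j' ≤ i := hj'.2
    omega

lemma filter_le_card {C : ℕ} (T : Finset V) (hT : ∀ w ∈ T, C < cls D w) :
    (Finset.univ.filter (fun w => cls D w ≤ C)).card + T.card ≤ Fintype.card V := by
  have hsub : T ⊆ Finset.univ.filter (fun w => ¬ cls D w ≤ C) := by
    intro w hw
    simp only [Finset.mem_filter, Finset.mem_univ, true_and, not_le]
    exact hT w hw
  have := Finset.card_filter_add_card_filter_not
    (s := (Finset.univ : Finset V)) (p := fun w => cls D w ≤ C)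
  have hle := Finset.card_le_card hsub
  rw [← Finset.card_univ]
  omega

lemma lab_le_nbrs {i : ℕ} {v : V} (h1 : 1 ≤ i) (h2 : i < D.s) (hv : v ∈ nbrs D i) :
    lab D v ≤ sig D i := by
  refine (lab_le_of_cls D v).trans ?_
  rw [cls_nbrs D h1 h2 hv]
  have hsub : Finset.univ.filter (fun w => cls D w ≤ i) ⊆
      (Finset.Icc 1 i).biUnion (fun j => nbrs D j) := by
    intro w hw
    simp only [Finset.mem_filter, Finset.mem_univ, true_and] at hw
    rcases classify D w with ⟨j, hj1, hj2, hjn⟩ | hw2 | ⟨j, hj1, hj2, hji⟩ | ⟨j, hj1, hj2, rfl⟩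
    · rw [cls_nbrs D hj1 hj2 hjn] at hw
      exact Finset.mem_biUnion.2 ⟨j, Finset.mem_Icc.2 ⟨hj1, hw⟩, hjn⟩
    · rw [cls_core_s D hw2] at hw; omega
    · rw [cls_isol D hj1 hj2 hji] at hw; omega
    · rw [cls_u D hj1 hj2] at hw; omega
  refine (Finset.card_le_card hsub).trans ?_
  refine (Finset.card_biUnion_le).trans ?_
  rw [sig]

lemma lab_le_core_s {v : V} (hv : v ∈ core G (D.S D.s)) :
    lab D v ≤ sig D (D.s - 1) + (core G (D.S D.s)).card := by
  refine (lab_le_of_cls D v).trans ?_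
  rw [cls_core_s D hv]
  have hsub : Finset.univ.filter (fun w => cls D w ≤ D.s) ⊆
      ((Finset.Icc 1 (D.s - 1)).biUnion (fun j => nbrs D j)) ∪ core G (D.S D.s) := by
    intro w hw
    simp only [Finset.mem_filter, Finset.mem_univ, true_and] at hw
    rcases classify D w with ⟨j, hj1, hj2, hjn⟩ | hw2 | ⟨j, hj1, hj2, hji⟩ | ⟨j, hj1, hj2, rfl⟩
    · exact Finset.mem_union_left _
        (Finset.mem_biUnion.2 ⟨j, Finset.mem_Icc.2 ⟨hj1, by omega⟩, hjn⟩)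
    · exact Finset.mem_union_right _ hw2
    · rw [cls_isol D hj1 hj2 hji] at hw; omega
    · rw [cls_u D hj1 hj2] at hw; omega
  refine (Finset.card_le_card hsub).trans ?_
  refine (Finset.card_union_le _ _).trans ?_
  have := Finset.card_biUnion_le (s := Finset.Icc 1 (D.s - 1)) (t := fun j => nbrs D j)
  rw [sig]
  omega

lemma lab_isol {i : ℕ} {v : V} (h1 : 1 ≤ i) (h2 : i ≤ D.s) (hv : v ∈ isolSet G (D.S i)) :
    lab D v + beta D (i - 1) ≤ Fintype.card V := by
  have hb := lab_le_of_cls D v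
  rw [cls_isol D h1 h2 hv] at hb
  have hT : ∀ w ∈ (Finset.Icc 1 (i-1)).biUnion (fun j => isolSet G (D.S j) ∪ {D.u j}),
      3 * D.s - 2 * i + 1 < cls D w := by
    intro w hw
    obtain ⟨j, hj, hwj⟩ := Finset.mem_biUnion.1 hw
    rw [Finset.mem_Icc] at hj
    rcases Finset.mem_union.1 hwj with h | h
    · rw [cls_isol D hj.1 (by omega) h]; omega
    · rw [Finset.mem_singleton] at h
      subst h
      rw [cls_u D hj.1 (by omega)]; omega
  have hfc := filter_le_card D _ hT
  have hcf := card_fam D (i := i - 1) (by omega)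
  omega

lemma lab_u {i : ℕ} (h1 : 1 ≤ i) (h2 : i < D.s) :
    lab D (D.u i) + beta D i ≤ Fintype.card V + 1 := by
  have hb := lab_le_of_cls D (D.u i)
  rw [cls_u D h1 h2] at hb
  set X := (Finset.Icc 1 i).biUnion (fun j => isolSet G (D.S j) ∪ {D.u j}) with hX
  have huX : D.u i ∈ X := Finset.mem_biUnion.2
    ⟨i, Finset.mem_Icc.2 ⟨h1, le_refl _⟩, Finset.mem_union_right _ (Finset.mem_singleton_self _)⟩
  have hT : ∀ w ∈ X \ {D.u i}, 3 * D.s - 2 * i < cls D w := by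
    intro w hw
    rw [Finset.mem_sdiff, Finset.mem_singleton] at hw
    obtain ⟨j, hj, hwj⟩ := Finset.mem_biUnion.1 hw.1
    rw [Finset.mem_Icc] at hj
    rcases Finset.mem_union.1 hwj with h | h
    · rw [cls_isol D hj.1 (by omega) h]; omega
    · rw [Finset.mem_singleton] at h
      subst h
      have hne : j ≠ i := fun hji => hw.2 (by rw [hji])
      rw [cls_u D hj.1 (by omega)]; omega
  have hfc := filter_le_card D _ hT
  have hcX : X.card = beta D i := card_fam D h2
  have hcT : (X \ {D.u i}).card = X.card - 1 := by
    rw [Finset.card_sdiff_of_subset (Finset.singleton_subset_iff.2 huX), Finset.card_singleton]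
  have hbeta : 1 ≤ beta D i := by
    rw [beta]
    have : (1:ℕ) ∈ Finset.Icc 1 i := Finset.mem_Icc.2 ⟨le_refl _, h1⟩
    calc 1 ≤ D.m 1 + 1 := by omega
    _ ≤ _ := Finset.single_le_sum (f := fun j => D.m j + 1) (fun _ _ => by omega) this
  omega
/- ========== delta-sequence arithmetic ========== -/

variable (hδ : 1 ≤ G.minDegree) (hp : G.minDegree + 2 ≤ Fintype.card V)

lemma isol_first (hδ : 1 ≤ G.minDegree) : isolSet G (D.S 1) = ∅ := by
  rw [D.first]
  ext v
  simp only [mem_isolSet, Finset.mem_univ, true_and, Finset.notMem_empty, iff_false]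
  push_neg
  have h := G.minDegree_le_degree v
  obtain ⟨w, hw⟩ := (G.degree_pos_iff_exists_adj v).1 (by omega)
  exact ⟨w, trivial, hw⟩

lemma m_first (hδ : 1 ≤ G.minDegree) : D.m 1 = 0 := by
  rw [DSeq.m, isol_first D hδ, Finset.card_empty]

lemma core_first (hδ : 1 ≤ G.minDegree) : core G (D.S 1) = Finset.univ := by
  rw [core, isol_first D hδ, Finset.sdiff_empty, D.first]

lemma degIn_first (v : V) : degIn G (D.S 1) v = G.degree v := by
  rw [degIn, D.first, SimpleGraph.degree]
  congr 1
  ext w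
  simp [SimpleGraph.mem_neighborFinset]

lemma two_le_s (hδ : 1 ≤ G.minDegree) (hp : G.minDegree + 2 ≤ Fintype.card V) : 2 ≤ D.s := by
  have hne : Nonempty V := by
    rw [← Fintype.card_pos_iff]; omega
  by_contra hs
  have hs1 : D.s = 1 := by have := D.hs; omega
  have hterm := D.terminal
  rw [hs1] at hterm
  rcases hterm with ⟨hc, _⟩ | ⟨_, hcomp⟩
  · rw [core_first D hδ] at hc
    have : (Finset.univ : Finset V).Nonempty := Finset.univ_nonempty
    rw [hc] at this
    exact Finset.not_nonempty_empty this
  · rw [core_first D hδ] at hcomp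
    obtain ⟨v, hv⟩ := G.exists_minimal_degree_vertex
    have hsub : Finset.univ.erase v ⊆ G.neighborFinset v := by
      intro w hw
      rw [Finset.mem_erase] at hw
      rw [SimpleGraph.mem_neighborFinset]
      exact (hcomp w (Finset.mem_univ w) v (Finset.mem_univ v) hw.1).symm
    have hcard := Finset.card_le_card hsub
    rw [Finset.card_erase_of_mem (Finset.mem_univ v), Finset.card_univ] at hcard
    rw [SimpleGraph.degree] at hv
    omega

lemma nbrs_card_eq_d {j : ℕ} (h2 : j < D.s) : (nbrs D j).card = D.d j := by
  rw [DSeq.d, if_pos h2, degIn, nbrs]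
  congr 1
  ext w
  simp [Finset.mem_filter]

lemma d_first (hδ : 1 ≤ G.minDegree) (hp : G.minDegree + 2 ≤ Fintype.card V)
    (hDelta : D.IsDeltaSeq) : D.d 1 = G.minDegree := by
  have hs2 := two_le_s D hδ hp
  rw [DSeq.d, if_pos (by omega : 1 < D.s)]
  haveI hne : Nonempty V := by rw [← Fintype.card_pos_iff]; omega
  obtain ⟨v, hv⟩ := G.exists_minimal_degree_vertex
  apply le_antisymm
  · have := hDelta 1 (le_refl _) (by omega) v (by rw [core_first D hδ]; exact Finset.mem_univ v)
    rw [degIn_first D v, ← hv] at this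
    exact this
  · rw [degIn_first D (D.u 1)]
    exact G.minDegree_le_degree _

lemma sum_Icc_one (i : ℕ) (h : 1 ≤ i) (f : ℕ → ℕ) :
    ∑ j ∈ Finset.Icc 1 i, f j = f 1 + ∑ j ∈ Finset.Icc 2 i, f j := by
  have he : Finset.Icc 1 i = insert 1 (Finset.Icc 2 i) := by
    ext x
    simp only [Finset.mem_Icc, Finset.mem_insert]
    omega
  rw [he, Finset.sum_insert (by simp [Finset.mem_Icc])]

lemma Z1 (hδ : 1 ≤ G.minDegree) (hp : G.minDegree + 2 ≤ Fintype.card V)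
    (hDelta : D.IsDeltaSeq) (hz : ∀ i, 2 ≤ i → i ≤ D.s → 0 ≤ D.z i)
    {i : ℕ} (h1 : 1 ≤ i) (h2 : i < D.s) :
    sig D i + 1 ≤ G.minDegree + beta D i := by
  have hsig : sig D i = G.minDegree + ∑ j ∈ Finset.Icc 2 i, D.d j := by
    rw [sig, sum_Icc_one i h1]
    rw [nbrs_card_eq_d D (by omega), d_first D hδ hp hDelta]
    congr 1
    apply Finset.sum_congr rfl
    intro j hj
    rw [Finset.mem_Icc] at hj
    exact nbrs_card_eq_d D (by omega)
  have hbeta : beta D i = 1 + ∑ j ∈ Finset.Icc 2 i, (D.m j + 1) := by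
    rw [beta, sum_Icc_one i h1, m_first D hδ]
  rcases Nat.lt_or_ge i 2 with hi2 | hi2
  · have hie : i = 1 := by omega
    subst hie
    rw [Finset.Icc_eq_empty (by omega), Finset.sum_empty] at hsig hbeta
    omega
  · have hzz := hz i hi2 (by omega)
    rw [DSeq.z] at hzz
    have hcast : (∑ j ∈ Finset.Icc 2 i, ((D.m j : ℤ) + 1 - (D.d j : ℤ)))
        = ((∑ j ∈ Finset.Icc 2 i, (D.m j + 1) : ℕ) : ℤ)
          - ((∑ j ∈ Finset.Icc 2 i, D.d j : ℕ) : ℤ) := by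
      push_cast
      rw [Finset.sum_sub_distrib]
    rw [hcast] at hzz
    have hle : ((∑ j ∈ Finset.Icc 2 i, D.d j : ℕ) : ℤ)
        ≤ ((∑ j ∈ Finset.Icc 2 i, (D.m j + 1) : ℕ) : ℤ) := by linarith
    have : (∑ j ∈ Finset.Icc 2 i, D.d j) ≤ ∑ j ∈ Finset.Icc 2 i, (D.m j + 1) := by
      exact_mod_cast hle
    omega

lemma core_s_complete : (core G (D.S D.s)).Nonempty →
    (2 ≤ (core G (D.S D.s)).card ∧
      ∀ v ∈ core G (D.S D.s), ∀ w ∈ core G (D.S D.s), v ≠ w → G.Adj v w) := by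
  intro hne
  rcases D.terminal with ⟨hc, _⟩ | h
  · rw [hc] at hne
    exact absurd hne Finset.not_nonempty_empty
  · exact h

lemma d_s_eq (hne : (core G (D.S D.s)).Nonempty) :
    D.d D.s = (core G (D.S D.s)).card - 1 := by
  obtain ⟨hr2, hcomp⟩ := core_s_complete D hne
  have hdeg : ∀ v ∈ core G (D.S D.s), degIn G (D.S D.s) v = (core G (D.S D.s)).card - 1 := by
    intro v hv
    have hfe : degIn G (D.S D.s) v = ((core G (D.S D.s)).erase v).card := by
      rw [degIn]
      congr 1
      ext w
      simp only [Finset.mem_filter, Finset.mem_erase]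
      constructor
      · rintro ⟨hwS, hadj⟩
        refine ⟨fun he => G.irrefl (he ▸ hadj), mem_core.2 ⟨hwS, fun hiso => ?_⟩⟩
        exact isol_not_adj D hiso (core_subset _ hv) hadj.symm
      · rintro ⟨hne', hw⟩
        exact ⟨core_subset _ hw, hcomp v hv w hw (Ne.symm hne')⟩
    rw [hfe, Finset.card_erase_of_mem hv]
  rw [DSeq.d, if_neg (lt_irrefl _), dif_pos hne]
  apply le_antisymm
  · obtain ⟨v, hv⟩ := hne
    exact (Finset.inf'_le _ hv).trans (le_of_eq (hdeg v hv))
  · exact Finset.le_inf' _ _ (fun v hv => le_of_eq (hdeg v hv).symm)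

lemma card_Ss : (D.S D.s).card = D.m D.s + (core G (D.S D.s)).card := by
  rw [core, Finset.card_sdiff_of_subset (isolSet_subset _), DSeq.m]
  have := Finset.card_le_card (isolSet_subset (G := G) (D.S D.s))
  omega

lemma Z2 (hδ : 1 ≤ G.minDegree) (hp : G.minDegree + 2 ≤ Fintype.card V)
    (hDelta : D.IsDeltaSeq) (hz : ∀ i, 2 ≤ i → i ≤ D.s → 0 ≤ D.z i)
    (hne : (core G (D.S D.s)).Nonempty) :
    sig D (D.s - 1) + (core G (D.S D.s)).card ≤
      beta D (D.s - 1) + D.m D.s + G.minDegree + 1 := by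
  have hs2 := two_le_s D hδ hp
  have hzz := hz D.s hs2 (le_refl _)
  rw [DSeq.z] at hzz
  have hsplit : ∀ f : ℕ → ℤ, ∑ j ∈ Finset.Icc 2 D.s, f j
      = ∑ j ∈ Finset.Icc 2 (D.s - 1), f j + f D.s := by
    intro f
    have h : D.s = (D.s - 1) + 1 := by omega
    rw [h, Finset.sum_Icc_succ_top (by omega : 2 ≤ D.s - 1 + 1), ← h]
  rw [hsplit] at hzz
  have hsig : sig D (D.s - 1) = G.minDegree + ∑ j ∈ Finset.Icc 2 (D.s - 1), D.d j := by
    rw [sig, sum_Icc_one (D.s - 1) (by omega)]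
    rw [nbrs_card_eq_d D (by omega), d_first D hδ hp hDelta]
    congr 1
    apply Finset.sum_congr rfl
    intro j hj
    rw [Finset.mem_Icc] at hj
    exact nbrs_card_eq_d D (by omega)
  have hbeta : beta D (D.s - 1) = 1 + ∑ j ∈ Finset.Icc 2 (D.s - 1), (D.m j + 1) := by
    rw [beta, sum_Icc_one (D.s - 1) (by omega), m_first D hδ]
  have hds := d_s_eq D hne
  have hr2 := (core_s_complete D hne).1
  have hA : ((∑ j ∈ Finset.Icc 2 (D.s-1), D.d j : ℕ) : ℤ) + (D.d D.s : ℤ)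
      ≤ ((∑ j ∈ Finset.Icc 2 (D.s-1), (D.m j + 1) : ℕ) : ℤ) + ((D.m D.s : ℤ) + 1) := by
    have : (∑ j ∈ Finset.Icc 2 (D.s-1), ((D.m j : ℤ) + 1 - (D.d j : ℤ)))
        = ((∑ j ∈ Finset.Icc 2 (D.s-1), (D.m j + 1) : ℕ) : ℤ)
          - ((∑ j ∈ Finset.Icc 2 (D.s-1), D.d j : ℕ) : ℤ) := by
      push_cast
      rw [Finset.sum_sub_distrib]
    rw [this] at hzz
    linarith
  have hA' : (∑ j ∈ Finset.Icc 2 (D.s-1), D.d j) + D.d D.s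
      ≤ (∑ j ∈ Finset.Icc 2 (D.s-1), (D.m j + 1)) + (D.m D.s + 1) := by
    exact_mod_cast hA
  rw [hds] at hA'
  omega
/- ========== edge bound ========== -/

section EdgeBound

variable (hDelta : D.IsDeltaSeq) (hz : ∀ i, 2 ≤ i → i ≤ D.s → 0 ≤ D.z i)

lemma bound_nn (hδ : 1 ≤ G.minDegree) (hp : G.minDegree + 2 ≤ Fintype.card V)
    (hDelta : D.IsDeltaSeq) (hz : ∀ i, 2 ≤ i → i ≤ D.s → 0 ≤ D.z i)
    {i j : ℕ} {v w : V} (hi1 : 1 ≤ i) (hi2 : i < D.s) (hj1 : 1 ≤ j) (hj2 : j < D.s)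
    (hv : v ∈ nbrs D i) (hw : w ∈ nbrs D j) :
    lab D v + lab D w ≤ Fintype.card V + G.minDegree := by
  have b1 := lab_le_nbrs D hi1 hi2 hv
  have b2 := lab_le_nbrs D hj1 hj2 hw
  have z1 := Z1 D hδ hp hDelta hz hj1 hj2
  have m1 : sig D i ≤ sig D (D.s - 1) := sig_mono D (by omega)
  have m2 : beta D j ≤ beta D (D.s - 1) := beta_mono D (by omega)
  have hce := card_eq D
  omega

lemma bound_nu (hδ : 1 ≤ G.minDegree) (hp : G.minDegree + 2 ≤ Fintype.card V)
    (hDelta : D.IsDeltaSeq) (hz : ∀ i, 2 ≤ i → i ≤ D.s → 0 ≤ D.z i)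
    {i j : ℕ} {v : V} (hi1 : 1 ≤ i) (hi2 : i < D.s) (hj1 : 1 ≤ j) (hj2 : j < D.s)
    (hv : v ∈ nbrs D j) (hadj : G.Adj v (D.u i)) :
    lab D v + lab D (D.u i) ≤ Fintype.card V + G.minDegree := by
  rcases le_or_gt j i with hji | hji
  · have b1 := lab_le_nbrs D hj1 hj2 hv
    have m1 : sig D j ≤ sig D i := sig_mono D hji
    have b2 := lab_u D hi1 hi2
    have z1 := Z1 D hδ hp hDelta hz hi1 hi2
    omega
  · exfalso
    have hvS : v ∈ D.S (i+1) :=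
      S_anti D (by omega) (by omega) (by omega) (nbrs_subset D j hv)
    exact not_adj_of_mem_succ D hi1 hi2 hvS hadj.symm

lemma bound_ni (hδ : 1 ≤ G.minDegree) (hp : G.minDegree + 2 ≤ Fintype.card V)
    (hDelta : D.IsDeltaSeq) (hz : ∀ i, 2 ≤ i → i ≤ D.s → 0 ≤ D.z i)
    {i j : ℕ} {v w : V} (hi1 : 1 ≤ i) (hi2 : i ≤ D.s) (hj1 : 1 ≤ j) (hj2 : j < D.s)
    (hv : v ∈ nbrs D j) (hw : w ∈ isolSet G (D.S i)) (hadj : G.Adj v w) :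
    lab D v + lab D w ≤ Fintype.card V + G.minDegree := by
  rcases le_or_gt i j with hij | hij
  · exfalso
    have hvS : v ∈ D.S i :=
      S_anti D hi1 hij (by omega) (nbrs_subset D j hv)
    exact isol_not_adj D hw hvS hadj.symm
  · have b1 := lab_le_nbrs D hj1 hj2 hv
    have m1 : sig D j ≤ sig D (i-1) := sig_mono D (by omega)
    have b2 := lab_isol D hi1 hi2 hw
    have z1 := Z1 D hδ hp hDelta hz (by omega : 1 ≤ i - 1) (by omega : i - 1 < D.s)
    omega

lemma bound_nc (hδ : 1 ≤ G.minDegree) (hp : G.minDegree + 2 ≤ Fintype.card V)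
    (hDelta : D.IsDeltaSeq) (hz : ∀ i, 2 ≤ i → i ≤ D.s → 0 ≤ D.z i)
    {j : ℕ} {v w : V} (hj1 : 1 ≤ j) (hj2 : j < D.s)
    (hv : v ∈ nbrs D j) (hw : w ∈ core G (D.S D.s)) :
    lab D v + lab D w ≤ Fintype.card V + G.minDegree := by
  have hne : (core G (D.S D.s)).Nonempty := ⟨w, hw⟩
  have b1 := lab_le_nbrs D hj1 hj2 hv
  have m1 : sig D j ≤ sig D (D.s - 1) := sig_mono D (by omega)
  have b2 := lab_le_core_s D hw
  have z2 := Z2 D hδ hp hDelta hz hne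
  have hr2 := (core_s_complete D hne).1
  have hce := card_eq D
  have hca := card_Ss D
  omega

lemma bound_cc (hδ : 1 ≤ G.minDegree) (hp : G.minDegree + 2 ≤ Fintype.card V)
    (hDelta : D.IsDeltaSeq) (hz : ∀ i, 2 ≤ i → i ≤ D.s → 0 ≤ D.z i)
    {v w : V} (hv : v ∈ core G (D.S D.s)) (hw : w ∈ core G (D.S D.s)) (hne : v ≠ w) :
    lab D v + lab D w ≤ Fintype.card V + G.minDegree := by
  have hcne : (core G (D.S D.s)).Nonempty := ⟨w, hw⟩
  have hlabne : lab D v ≠ lab D w := fun h => hne (lab_inj D h)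
  have b1 := lab_le_core_s D hv
  have b2 := lab_le_core_s D hw
  have z2 := Z2 D hδ hp hDelta hz hcne
  have hr2 := (core_s_complete D hcne).1
  have hce := card_eq D
  have hca := card_Ss D
  omega

lemma lab_add_le (hδ : 1 ≤ G.minDegree) (hp : G.minDegree + 2 ≤ Fintype.card V)
    (hDelta : D.IsDeltaSeq) (hz : ∀ i, 2 ≤ i → i ≤ D.s → 0 ≤ D.z i)
    {v w : V} (hvw : G.Adj v w) :
    lab D v + lab D w ≤ Fintype.card V + G.minDegree := by
  have hsymm := hvw.symm
  rcases classify D v with ⟨i, hi1, hi2, hvn⟩ | hvc | ⟨i, hi1, hi2, hvi⟩ | ⟨i, hi1, hi2, hve⟩ <;>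
    rcases classify D w with ⟨j, hj1, hj2, hwn⟩ | hwc | ⟨j, hj1, hj2, hwi⟩ | ⟨j, hj1, hj2, hwe⟩
  · exact bound_nn D hδ hp hDelta hz hi1 hi2 hj1 hj2 hvn hwn
  · exact bound_nc D hδ hp hDelta hz hi1 hi2 hvn hwc
  · exact bound_ni D hδ hp hDelta hz hj1 hj2 hi1 hi2 hvn hwi hvw
  · subst hwe
    exact bound_nu D hδ hp hDelta hz hj1 hj2 hi1 hi2 hvn hvw
  · have := bound_nc D hδ hp hDelta hz hj1 hj2 hwn hvc
    omega
  · exact bound_cc D hδ hp hDelta hz hvc hwc (G.ne_of_adj hvw)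
  · exfalso
    have hvS : v ∈ D.S j :=
      S_anti D hj1 hj2 (le_refl _) (core_subset _ hvc)
    exact isol_not_adj D hwi hvS hsymm
  · exfalso
    subst hwe
    have hvS : v ∈ D.S (j+1) :=
      S_anti D (by omega) hj2 (le_refl _) (core_subset _ hvc)
    exact not_adj_of_mem_succ D hj1 hj2 hvS hsymm
  · have := bound_ni D hδ hp hDelta hz hi1 hi2 hj1 hj2 hwn hvi hsymm
    omega
  · exfalso
    have hwS : w ∈ D.S i :=
      S_anti D hi1 hi2 (le_refl _) (core_subset _ hwc)
    exact isol_not_adj D hvi hwS hvw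
  · exfalso
    rcases le_or_gt i j with hij | hij
    · have hwS : w ∈ D.S i :=
        S_anti D hi1 hij hj2 (isolSet_subset _ hwi)
      exact isol_not_adj D hvi hwS hvw
    · have hvS : v ∈ D.S j :=
        S_anti D hj1 (by omega) hi2 (isolSet_subset _ hvi)
      exact isol_not_adj D hwi hvS hsymm
  · exfalso
    subst hwe
    rcases le_or_gt i j with hij | hij
    · have huS : D.u j ∈ D.S i :=
        S_anti D hi1 hij (by omega) (u_mem_S D hj1 hj2)
      exact isol_not_adj D hvi huS hvw
    · have hvS : v ∈ D.S (j+1) :=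
        S_anti D (by omega) hij hi2 (isolSet_subset _ hvi)
      exact not_adj_of_mem_succ D hj1 hj2 hvS hsymm
  · subst hve
    have := bound_nu D hδ hp hDelta hz hi1 hi2 hj1 hj2 hwn hsymm
    omega
  · exfalso
    subst hve
    have hwS : w ∈ D.S (i+1) :=
      S_anti D (by omega) hi2 (le_refl _) (core_subset _ hwc)
    exact not_adj_of_mem_succ D hi1 hi2 hwS hvw
  · exfalso
    subst hve
    rcases le_or_gt j i with hji | hji
    · have huS : D.u i ∈ D.S j :=
        S_anti D hj1 hji (by omega) (u_mem_S D hi1 hi2)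
      exact isol_not_adj D hwi huS hsymm
    · have hwS : w ∈ D.S (i+1) :=
        S_anti D (by omega) hji hj2 (isolSet_subset _ hwi)
      exact not_adj_of_mem_succ D hi1 hi2 hwS hvw
  · exfalso
    subst hve; subst hwe
    rcases lt_trichotomy i j with hij | hij | hij
    · have hwS : D.u j ∈ D.S (i+1) :=
        S_anti D (by omega) hij (by omega) (u_mem_S D hj1 hj2)
      exact not_adj_of_mem_succ D hi1 hi2 hwS hvw
    · subst hij
      exact G.irrefl hvw
    · have hvS : D.u i ∈ D.S (j+1) :=
        S_anti D (by omega) hij (by omega) (u_mem_S D hi1 hi2)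
      exact not_adj_of_mem_succ D hj1 hj2 hvS hsymm

end EdgeBound
/- ========== strength bounds ========== -/

lemma exists_edge (hδ : 1 ≤ G.minDegree) (hp : G.minDegree + 2 ≤ Fintype.card V) :
    ∃ a b : V, G.Adj a b := by
  haveI hne : Nonempty V := by rw [← Fintype.card_pos_iff]; omega
  obtain ⟨v⟩ := hne
  have h := G.minDegree_le_degree v
  obtain ⟨w, hw⟩ := (G.degree_pos_iff_exists_adj v).1 (by omega)
  exact ⟨v, w, hw⟩

lemma strOf_lab_le (hδ : 1 ≤ G.minDegree) (hp : G.minDegree + 2 ≤ Fintype.card V)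
    (hDelta : D.IsDeltaSeq) (hz : ∀ i, 2 ≤ i → i ≤ D.s → 0 ≤ D.z i) :
    strOf G (lab D) ≤ Fintype.card V + G.minDegree := by
  apply csSup_le
  · obtain ⟨a, b, hab⟩ := exists_edge (G := G) hδ hp
    exact ⟨lab D a + lab D b, a, b, hab, rfl⟩
  · rintro n ⟨a, b, hab, rfl⟩
    exact lab_add_le D hδ hp hDelta hz hab

lemma le_strOf (hδ : 1 ≤ G.minDegree) (hp : G.minDegree + 2 ≤ Fintype.card V)
    {f : V → ℕ} (hf : IsNumbering f) :
    Fintype.card V + G.minDegree ≤ strOf G f := by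
  have h1p : 1 ≤ Fintype.card V := by omega
  obtain ⟨v, -, hv⟩ := hf.2.2 (Set.mem_Icc.2 ⟨h1p, le_refl _⟩)
  have hinj : Function.Injective f := fun a b h =>
    hf.2.1 (Set.mem_univ a) (Set.mem_univ b) h
  have hdeg : G.minDegree ≤ G.degree v := G.minDegree_le_degree v
  have hex : ∃ w ∈ G.neighborFinset v, G.minDegree ≤ f w := by
    by_contra hc
    push_neg at hc
    have hsub : (G.neighborFinset v).image f ⊆ Finset.Icc 1 (G.minDegree - 1) := by
      intro x hx
      rw [Finset.mem_image] at hx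
      obtain ⟨w, hw, rfl⟩ := hx
      rw [Finset.mem_Icc]
      have h1 : 1 ≤ f w := (hf.1 (Set.mem_univ w)).1
      have h2 := hc w hw
      omega
    have hcard := Finset.card_le_card hsub
    rw [Finset.card_image_of_injective _ hinj, Nat.card_Icc,
      SimpleGraph.card_neighborFinset_eq_degree] at hcard
    omega
  obtain ⟨w, hw, hfw⟩ := hex
  rw [SimpleGraph.mem_neighborFinset] at hw
  have hmem2 : f v + f w ∈ {n | ∃ a b, G.Adj a b ∧ n = f a + f b} := ⟨v, w, hw, rfl⟩
  have hbdd : BddAbove {n | ∃ a b, G.Adj a b ∧ n = f a + f b} := by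
    refine ⟨2 * Fintype.card V, ?_⟩
    rintro n ⟨a, b, hab, rfl⟩
    have ha := (hf.1 (Set.mem_univ a)).2
    have hb := (hf.1 (Set.mem_univ b)).2
    omega
  have hle := le_csSup hbdd hmem2
  rw [strOf]
  have h2 : Fintype.card V + G.minDegree ≤ f v + f w := by
    rw [← hv]
    exact Nat.add_le_add_left hfw _
  exact le_trans h2 hle

end StrengthAux

/-- If `G` has order `p` with `p - 2 ≥ δ(G) ≥ 1` and admits a δ-sequence whose partial sums
`z̃ᵢ = Σ_{j=2}^i (mⱼ + 1 - δⱼ)` are all nonnegative for `2 ≤ i ≤ s`, then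
`str(G) = p + δ(G)`. -/
theorem strength_eq_of_deltaSeq {V : Type*} [Fintype V] (G : SimpleGraph V)
    [DecidableRel G.Adj] (hδ : 1 ≤ G.minDegree)
    (hp : G.minDegree + 2 ≤ Fintype.card V)
    (D : DSeq G) (hDelta : D.IsDeltaSeq)
    (hz : ∀ i, 2 ≤ i → i ≤ D.s → 0 ≤ D.z i) :
    strength G = Fintype.card V + G.minDegree := by
  have hmem : strOf G (StrengthAux.lab D) ∈
      {n | ∃ f : V → ℕ, IsNumbering f ∧ strOf G f = n} :=
    ⟨StrengthAux.lab D, StrengthAux.isNumbering_lab D, rfl⟩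
  apply le_antisymm
  · exact le_trans (Nat.sInf_le hmem) (StrengthAux.strOf_lab_le D hδ hp hDelta hz)
  · refine le_csInf ⟨_, hmem⟩ ?_
    rintro b ⟨f, hf, rfl⟩
    exact StrengthAux.le_strOf hδ hp hf
end

section
/- If G is a one-point union of cycles (a graph of order p obtained from a collection of cycles by identifying one vertex from each cycle into a single common vertex), then str(G) = p + 2. -/
/-!
Lower bound: every vertex lies on a cycle, so the vertex labelled `p` has two neighbours, and one
of them carries a label `≥ 2`. Upper bound: label the hub `1` and list the other vertices cycle
by cycle, so that every edge avoiding the hub joins two consecutive vertices of the list; the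
labels `p, 2, p - 1, 3, p - 2, …` along the list give consecutive sums `≤ p + 2`, and edges at the
hub have sum `≤ p + 1`.
-/

open Finset

/-- The one-point union of the cycles `C_{n 0}, …, C_{n (t-1)}`: the hub is `none`, and the
`i`-th cycle consists of the hub together with the path `(i, 0), (i, 1), …, (i, n i - 2)`,
whose two ends are joined to the hub. -/
def onePointUnionCycles (t : ℕ) (n : Fin t → ℕ) :
    SimpleGraph (Option (Σ i : Fin t, Fin (n i - 1))) where
  Adj x y :=
    match x, y with
    | none, none => False
    | none, some ⟨i, a⟩ => (a : ℕ) = 0 ∨ (a : ℕ) = n i - 2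
    | some ⟨i, a⟩, none => (a : ℕ) = 0 ∨ (a : ℕ) = n i - 2
    | some ⟨i, a⟩, some ⟨j, b⟩ => i = j ∧ ((a : ℕ) + 1 = (b : ℕ) ∨ (b : ℕ) + 1 = (a : ℕ))
  symm := by
    constructor
    rintro (_ | ⟨i, a⟩) (_ | ⟨j, b⟩) h
    · exact h
    · exact h
    · exact h
    · obtain ⟨rfl, h2⟩ := h
      exact ⟨rfl, h2.symm⟩
  loopless := by
    constructor
    rintro (_ | ⟨i, a⟩) h
    · exact h
    · rcases h.2 with h2 | h2 <;> omega

open SimpleGraph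

section Numbering

variable {V : Type*} [Fintype V]

theorem isNumbering_of_injective {f : V → ℕ} (hf : Function.Injective f)
    (hmem : ∀ v, f v ∈ Set.Icc 1 (Fintype.card V)) : IsNumbering f := by
  have hmaps : Set.MapsTo f Set.univ (Set.Icc 1 (Fintype.card V)) := fun v _ => hmem v
  refine ⟨hmaps, hf.injOn, ?_⟩
  simpa using Finset.surjOn_of_injOn_of_card_le (s := Finset.univ)
    (t := Finset.Icc 1 (Fintype.card V)) f (by simpa using hmaps) (by simpa using hf) (by simp)

theorem exists_isNumbering : ∃ f : V → ℕ, IsNumbering f :=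
  ⟨fun v => Fintype.equivFin V v + 1,
    isNumbering_of_injective (fun _ _ h => (Fintype.equivFin V).injective (Fin.ext (by omega)))
      (fun v => ⟨by omega, (Fintype.equivFin V v).isLt⟩)⟩

variable {G : SimpleGraph V} {f : V → ℕ}

theorem add_le_strOf {u v : V} (huv : G.Adj u v) : f u + f v ≤ strOf G f := by
  refine le_csSup ((Set.finite_range fun x : V × V => f x.1 + f x.2).subset ?_).bddAbove
    ⟨u, v, huv, rfl⟩
  rintro _ ⟨a, b, -, rfl⟩
  exact ⟨(a, b), rfl⟩

theorem strOf_le {B : ℕ} (h : ∀ u v, G.Adj u v → f u + f v ≤ B) : strOf G f ≤ B :=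
  csSup_le' fun _ ⟨u, v, huv, hn⟩ => hn ▸ h u v huv

theorem strength_le_strOf (hf : IsNumbering f) : strength G ≤ strOf G f :=
  Nat.sInf_le ⟨f, hf, rfl⟩

theorem card_add_two_le_strOf [Nonempty V] (hG : ∀ u, (G.neighborSet u).Nontrivial)
    (hf : IsNumbering f) : Fintype.card V + 2 ≤ strOf G f := by
  obtain ⟨u, -, hu⟩ := hf.surjOn ⟨Nat.one_le_iff_ne_zero.2 Fintype.card_ne_zero, le_rfl⟩
  obtain ⟨v, huv, w, huw, hvw⟩ := hG u
  have hfvw : f v ≠ f w := fun h => hvw (hf.injOn trivial trivial h)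
  have hv := (hf.mapsTo (Set.mem_univ v)).1
  have hw := (hf.mapsTo (Set.mem_univ w)).1
  have := add_le_strOf (f := f) huv
  have := add_le_strOf (f := f) huw
  omega

theorem card_add_two_le_strength [Nonempty V] (hG : ∀ u, (G.neighborSet u).Nontrivial) :
    Fintype.card V + 2 ≤ strength G := by
  obtain ⟨f, hf⟩ := exists_isNumbering (V := V)
  exact le_csInf ⟨_, f, hf, rfl⟩ fun _ ⟨g, hg, hn⟩ => hn ▸ card_add_two_le_strOf hG hg

end Numbering

def zigzag (m j : ℕ) : ℕ := if j % 2 = 0 then m + 1 - j / 2 else j / 2 + 2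

theorem zigzag_mem_Icc {m j : ℕ} (hj : j < m) : zigzag m j ∈ Set.Icc 2 (m + 1) := by
  rw [Set.mem_Icc]; unfold zigzag; constructor <;> split <;> omega

theorem zigzag_injOn (m : ℕ) : Set.InjOn (zigzag m) (Set.Iio m) := by
  intro j hj k hk h
  simp only [Set.mem_Iio] at hj hk
  unfold zigzag at h; split at h <;> split at h <;> omega

theorem zigzag_add_zigzag_succ_le {m j : ℕ} (hj : j + 1 < m) :
    zigzag m j + zigzag m (j + 1) ≤ m + 3 := by
  unfold zigzag; split <;> split <;> omega

section Hub

variable {W : Type*} [Fintype W] {m : ℕ}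

def hubZigzag (e : W ≃ Fin m) : Option W → ℕ
  | none => 1
  | some w => zigzag m (e w)

theorem isNumbering_hubZigzag (e : W ≃ Fin m) : IsNumbering (hubZigzag e) := by
  have hcard : Fintype.card (Option W) = m + 1 := by
    rw [Fintype.card_option, Fintype.card_congr e, Fintype.card_fin]
  refine isNumbering_of_injective ?_ ?_
  · rintro (_ | v) (_ | w) h
    · rfl
    · have := (zigzag_mem_Icc (e w).isLt).1
      simp only [hubZigzag] at h
      omega
    · have := (zigzag_mem_Icc (e v).isLt).1
      simp only [hubZigzag] at h
      omega
    · exact congrArg some (e.injective (Fin.ext (zigzag_injOn m (e v).isLt (e w).isLt h)))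
  · rw [hcard]
    rintro (_ | v)
    · exact ⟨le_rfl, Nat.le_add_left 1 m⟩
    · exact Set.Icc_subset_Icc_left one_le_two (zigzag_mem_Icc (e v).isLt)

theorem strength_le_card_add_two_of_pathGraph {G : SimpleGraph (Option W)} (e : W ≃ Fin m)
    (hG : ∀ v w, G.Adj (some v) (some w) → (pathGraph m).Adj (e v) (e w)) :
    strength G ≤ Fintype.card (Option W) + 2 := by
  rw [Fintype.card_option, Fintype.card_congr e, Fintype.card_fin]
  refine (strength_le_strOf (isNumbering_hubZigzag e)).trans (strOf_le ?_)
  rintro (_ | v) (_ | w) hvw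
  · exact (G.irrefl hvw).elim
  · exact (Nat.add_le_add_left (zigzag_mem_Icc (e w).isLt).2 1).trans (by omega)
  · exact (Nat.add_le_add_right (zigzag_mem_Icc (e v).isLt).2 1).trans (by omega)
  · rcases pathGraph_adj.1 (hG v w hvw) with h | h
    · simpa only [hubZigzag, ← h] using zigzag_add_zigzag_succ_le (h ▸ (e w).isLt)
    · rw [add_comm]
      simpa only [hubZigzag, ← h] using zigzag_add_zigzag_succ_le (h ▸ (e v).isLt)

end Hub

section OnePointUnion

variable {t : ℕ} {n : Fin t → ℕ}

theorem onePointUnionCycles_adj_some_pathGraph {v w : Σ i : Fin t, Fin (n i - 1)}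
    (h : (onePointUnionCycles t n).Adj (some v) (some w)) :
    (pathGraph _).Adj (finSigmaFinEquiv v) (finSigmaFinEquiv w) := by
  obtain ⟨i, a⟩ := v
  obtain ⟨j, b⟩ := w
  obtain ⟨rfl, hab⟩ := h
  rw [pathGraph_adj, finSigmaFinEquiv_apply, finSigmaFinEquiv_apply]
  dsimp only
  omega

theorem onePointUnionCycles_neighborSet_nontrivial (ht : 1 ≤ t) (hn : ∀ i, 3 ≤ n i)
    (u : Option (Σ i : Fin t, Fin (n i - 1))) :
    ((onePointUnionCycles t n).neighborSet u).Nontrivial := by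
  rcases u with _ | ⟨i, a⟩
  · have := hn ⟨0, ht⟩
    refine ⟨some ⟨⟨0, ht⟩, ⟨0, by omega⟩⟩, Or.inl rfl,
      some ⟨⟨0, ht⟩, ⟨n ⟨0, ht⟩ - 2, by omega⟩⟩, Or.inr rfl, ?_⟩
    simp only [ne_eq, Option.some.injEq, Sigma.mk.injEq, heq_eq_eq, Fin.mk.injEq, true_and]
    omega
  · have := hn i
    have := a.isLt
    by_cases h0 : (a : ℕ) = 0
    · exact ⟨none, Or.inl h0, some ⟨i, ⟨1, by omega⟩⟩, ⟨rfl, Or.inl (by dsimp only; omega)⟩,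
        by simp⟩
    by_cases hlast : (a : ℕ) = n i - 2
    · exact ⟨none, Or.inr hlast, some ⟨i, ⟨a - 1, by omega⟩⟩,
        ⟨rfl, Or.inr (by dsimp only; omega)⟩, by simp⟩
    refine ⟨some ⟨i, ⟨a - 1, by omega⟩⟩, ⟨rfl, Or.inr (by dsimp only; omega)⟩,
      some ⟨i, ⟨a + 1, by omega⟩⟩, ⟨rfl, Or.inl rfl⟩, ?_⟩
    simp

end OnePointUnion

/-- The one-point union of cycles of total order `p` has strength `p + 2`. -/
theorem strength_onePointUnionCycles (t : ℕ) (ht : 1 ≤ t) (n : Fin t → ℕ)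
    (hn : ∀ i, 3 ≤ n i) :
    strength (onePointUnionCycles t n) =
      Fintype.card (Option (Σ i : Fin t, Fin (n i - 1))) + 2 :=
  le_antisymm
    (strength_le_card_add_two_of_pathGraph finSigmaFinEquiv
      fun _ _ => onePointUnionCycles_adj_some_pathGraph)
    (card_add_two_le_strength (onePointUnionCycles_neighborSet_nontrivial ht hn))
end

section
/- Let T be a forest without isolated vertices of order at least 3 and let P_T be the set of pendant vertices of T that are adjacent to a vertex of degree at least 2. Then there is a δ-sequence {𝒯_i}_{i=1}^s of T such that z̃_s(T) ≥ |P_T| − |N_T(P_T)|, and moreover z̃_i(T) ≥ 0 for all 2 ≤ i ≤ s. -/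
open Finset

open scoped Classical

/-- The set of pendant vertices of `G` that are adjacent to a vertex of degree at least `2`. -/
noncomputable def pendSet {V : Type*} [Fintype V] (G : SimpleGraph V) : Finset V :=
  Finset.univ.filter fun v =>
    degIn G Finset.univ v = 1 ∧ ∃ w, G.Adj v w ∧ 2 ≤ degIn G Finset.univ w

/-- The set of all neighbours of vertices of `A`. -/
noncomputable def nbrs {V : Type*} [Fintype V] (G : SimpleGraph V) (A : Finset V) : Finset V :=
  Finset.univ.filter fun w => ∃ v ∈ A, G.Adj w v


section ForestAuxNS

open Finset SimpleGraph

variable {V : Type*} [Fintype V] {G : SimpleGraph V} {S : Finset V} {u v w : V}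

lemma degIn_def (G : SimpleGraph V) (S : Finset V) (v : V) :
    degIn G S v = (S.filter fun w => G.Adj v w).card := rfl

lemma mem_isolSet_iff : v ∈ isolSet G S ↔ v ∈ S ∧ ∀ w ∈ S, ¬ G.Adj v w := by
  simp only [isolSet, Finset.mem_filter]

lemma mem_core_iff : v ∈ core G S ↔ v ∈ S ∧ ∃ w ∈ S, G.Adj v w := by
  unfold core isolSet
  simp only [Finset.mem_sdiff, Finset.mem_filter]
  constructor
  · rintro ⟨hv, h⟩
    refine ⟨hv, ?_⟩
    by_contra hc
    push_neg at hc
    exact h ⟨hv, hc⟩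
  · rintro ⟨hv, w, hw, hadj⟩
    exact ⟨hv, fun h => h.2 w hw hadj⟩

lemma core_subset : core G S ⊆ S := Finset.sdiff_subset

lemma mem_core_of_adj (hv : v ∈ S) (hw : w ∈ S) (h : G.Adj v w) : v ∈ core G S :=
  mem_core_iff.2 ⟨hv, w, hw, h⟩

lemma one_le_degIn (h : v ∈ core G S) : 1 ≤ degIn G S v := by
  obtain ⟨hv, w, hw, hadj⟩ := mem_core_iff.1 h
  exact Finset.card_pos.2 ⟨w, Finset.mem_filter.2 ⟨hw, hadj⟩⟩

lemma filter_adj_core (hv : v ∈ S) :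
    (core G S).filter (fun x => G.Adj v x) = S.filter (fun x => G.Adj v x) := by
  ext y
  simp only [Finset.mem_filter]
  constructor
  · rintro ⟨h1, h2⟩
    exact ⟨core_subset h1, h2⟩
  · rintro ⟨h1, h2⟩
    exact ⟨mem_core_of_adj h1 hv h2.symm, h2⟩

lemma degIn_core (hv : v ∈ S) : degIn G (core G S) v = degIn G S v := by
  rw [degIn_def, degIn_def, filter_adj_core hv]

/-- pendant vertices with a neighbour of degree at least two, inside `S`. -/
noncomputable def pSet (G : SimpleGraph V) (S : Finset V) : Finset V :=
  S.filter fun v => degIn G S v = 1 ∧ ∃ w ∈ S, G.Adj v w ∧ 2 ≤ degIn G S w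

/-- neighbours (in `S`) of `pSet G S`. -/
noncomputable def nSet (G : SimpleGraph V) (S : Finset V) : Finset V :=
  S.filter fun w => ∃ v ∈ pSet G S, G.Adj w v

/-- the potential `|P| - |N|`. -/
noncomputable def phi (G : SimpleGraph V) (S : Finset V) : ℤ :=
  ((pSet G S).card : ℤ) - ((nSet G S).card : ℤ)

lemma mem_pSet_iff :
    v ∈ pSet G S ↔ v ∈ S ∧ (degIn G S v = 1 ∧ ∃ w ∈ S, G.Adj v w ∧ 2 ≤ degIn G S w) :=
  Finset.mem_filter

lemma mem_nSet_iff : w ∈ nSet G S ↔ w ∈ S ∧ ∃ v ∈ pSet G S, G.Adj w v :=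
  Finset.mem_filter

lemma pSet_core : pSet G (core G S) = pSet G S := by
  ext v
  rw [mem_pSet_iff, mem_pSet_iff]
  constructor
  · rintro ⟨hv, hdeg, w, hw, hadj, hdw⟩
    have hvS := core_subset hv
    have hwS := core_subset hw
    exact ⟨hvS, by rwa [degIn_core hvS] at hdeg, w, hwS, hadj,
      by rwa [degIn_core hwS] at hdw⟩
  · rintro ⟨hv, hdeg, w, hw, hadj, hdw⟩
    exact ⟨mem_core_of_adj hv hw hadj, by rwa [degIn_core hv], w,
      mem_core_of_adj hw hv hadj.symm, hadj, by rwa [degIn_core hw]⟩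

lemma nSet_core : nSet G (core G S) = nSet G S := by
  ext x
  rw [mem_nSet_iff, mem_nSet_iff, pSet_core]
  constructor
  · rintro ⟨hx, v, hv, hadj⟩
    exact ⟨core_subset hx, v, hv, hadj⟩
  · rintro ⟨hx, v, hv, hadj⟩
    exact ⟨mem_core_of_adj hx ((mem_pSet_iff.1 hv).1) hadj, v, hv, hadj⟩

lemma phi_core : phi G (core G S) = phi G S := by
  rw [phi, phi, pSet_core, nSet_core]

lemma phi_terminal (h : Terminal G S) : phi G S ≤ 0 := by
  have hP : pSet G S = ∅ := by
    rw [Finset.eq_empty_iff_forall_notMem]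
    intro v hv
    obtain ⟨hvS, hdeg, w, hwS, hadj, hdw⟩ := mem_pSet_iff.1 hv
    rcases h with ⟨hcore, -⟩ | ⟨hcard, hclq⟩
    · have : v ∈ core G S := mem_core_of_adj hvS hwS hadj
      rw [hcore] at this
      exact absurd this (Finset.notMem_empty v)
    · have hdw' : 1 < (S.filter fun y => G.Adj w y).card := by
        rw [degIn_def] at hdw; omega
      obtain ⟨x, hx, hxv⟩ := Finset.exists_mem_ne hdw' v
      rw [Finset.mem_filter] at hx
      obtain ⟨hxS, hwx⟩ := hx
      have hvc : v ∈ core G S := mem_core_of_adj hvS hwS hadj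
      have hxc : x ∈ core G S := mem_core_of_adj hxS hwS hwx.symm
      have hvx : G.Adj v x := hclq v hvc x hxc (Ne.symm hxv)
      have h2 : 1 < (S.filter fun y => G.Adj v y).card := by
        apply Finset.one_lt_card.2
        exact ⟨w, Finset.mem_filter.2 ⟨hwS, hadj⟩, x, Finset.mem_filter.2 ⟨hxS, hvx⟩, hwx.ne⟩
      rw [degIn_def] at hdeg
      omega
  rw [phi, hP]
  simp

lemma huniqnbr {T : Finset V} (h1 : degIn G T v = 1) (hz : w ∈ T) (hadj : G.Adj v w) :
    T.filter (fun y => G.Adj v y) = {w} := by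
  rw [degIn_def] at h1
  obtain ⟨t, ht⟩ := Finset.card_eq_one.1 h1
  have hmem : w ∈ T.filter (fun y => G.Adj v y) := Finset.mem_filter.2 ⟨hz, hadj⟩
  rw [ht] at hmem ⊢
  rw [Finset.mem_singleton] at hmem
  rw [hmem]

lemma terminal_deg_le_one (hac : G.IsAcyclic) (h : Terminal G S)
    (hne : (core G S).Nonempty) :
    (core G S).inf' hne (degIn G S) ≤ 1 := by
  rcases h with ⟨hcore, -⟩ | ⟨hcard, hclq⟩
  · rw [hcore] at hne; exact absurd hne (by simp)
  · have h2 : (core G S).card = 2 := by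
      by_contra hc
      have h3 : 3 ≤ (core G S).card := by omega
      obtain ⟨v, hv⟩ := hne
      obtain ⟨x, hx, hxv⟩ := Finset.exists_mem_ne (s := core G S) (by omega) v
      have hsd : ((core G S) \ {v, x}).Nonempty := by
        rw [← Finset.card_pos]
        have hle := Finset.le_card_sdiff ({v, x} : Finset V) (core G S)
        have hc2 : ({v, x} : Finset V).card ≤ 2 :=
          (Finset.card_insert_le _ _).trans (by simp)
        omega
      obtain ⟨y, hy⟩ := hsd
      rw [Finset.mem_sdiff] at hy
      obtain ⟨hyc, hyn⟩ := hy
      simp only [Finset.mem_insert, Finset.mem_singleton, not_or] at hyn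
      have hvx : G.Adj v x := hclq v hv x hx (Ne.symm hxv)
      have hvy : G.Adj v y := hclq v hv y hyc (Ne.symm hyn.1)
      have hyx : G.Adj y x := hclq y hyc x hx hyn.2
      have hp2 : (Walk.cons hvy (Walk.cons hyx Walk.nil)).IsPath := by
        refine Walk.IsPath.cons (Walk.IsPath.cons (Walk.IsPath.nil) ?_) ?_
        · simp [hyx.ne]
        · simp [hvy.ne, hvx.ne]
      have hequ : (⟨Walk.cons hvy (Walk.cons hyx Walk.nil), hp2⟩ : G.Path v x)
          = SimpleGraph.Path.singleton hvx :=
        SimpleGraph.isAcyclic_iff_path_unique.mp hac _ _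
      have hl := congrArg (fun q : G.Path v x => q.1.length) hequ
      simp [SimpleGraph.Path.singleton] at hl
    obtain ⟨a, b, hab, habs⟩ := Finset.card_eq_two.1 h2
    have hac' : a ∈ core G S := by rw [habs]; simp
    have hbc : b ∈ core G S := by rw [habs]; simp
    have hadj : G.Adj a b := hclq a hac' b hbc hab
    have hdeg : degIn G S a = 1 := by
      have hfil : S.filter (fun y => G.Adj a y) = {b} := by
        apply Finset.eq_singleton_iff_unique_mem.2
        refine ⟨Finset.mem_filter.2 ⟨core_subset hbc, hadj⟩, ?_⟩
        intro y hy
        rw [Finset.mem_filter] at hy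
        have hyc : y ∈ core G S := mem_core_of_adj hy.1 (core_subset hac') hy.2.symm
        rw [habs] at hyc
        simp only [Finset.mem_insert, Finset.mem_singleton] at hyc
        rcases hyc with rfl | rfl
        · exact absurd hy.2 (G.loopless.irrefl y)
        · rfl
      rw [degIn_def, hfil, Finset.card_singleton]
    exact le_trans (Finset.inf'_le _ hac') hdeg.le

lemma exists_leaf (hac : G.IsAcyclic) (hne : (core G S).Nonempty) :
    ∃ u ∈ core G S, degIn G S u = 1 := by
  classical
  set Q : ℕ → Prop := fun n => ∃ (a b : V) (p : G.Walk a b),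
    p.IsPath ∧ (∀ x ∈ p.support, x ∈ S) ∧ p.length = n with hQ
  obtain ⟨v, hv⟩ := hne
  obtain ⟨hvS, w, hwS, hadj⟩ := mem_core_iff.1 hv
  have h1 : Q 1 := by
    rw [hQ]
    refine ⟨v, w, Walk.cons hadj Walk.nil, Walk.IsPath.cons Walk.IsPath.nil (by simp [hadj.ne]),
      ?_, by simp⟩
    intro x hx
    simp only [Walk.support_cons, Walk.support_nil, List.mem_cons, List.mem_singleton,
      List.not_mem_nil, or_false] at hx
    rcases hx with rfl | rfl <;> assumption
  have hbd : ∀ n, Q n → n < Fintype.card V := by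
    rw [hQ]
    rintro n ⟨a, b, p, hp, -, rfl⟩
    exact hp.length_lt
  set n := Nat.findGreatest Q (Fintype.card V) with hn
  have hQn : Q n := Nat.findGreatest_spec (hbd 1 h1).le h1
  have hn1 : 1 ≤ n := Nat.le_findGreatest (hbd 1 h1).le h1
  rw [hQ] at hQn
  obtain ⟨a, b, p, hp, hsupp, hlen⟩ := hQn
  cases p with
  | nil => simp at hlen; omega
  | @cons _ c _ hadj' q =>
    have haS : a ∈ S := hsupp a (Walk.start_mem_support _)
    have hcS : c ∈ S := hsupp c (by
      rw [Walk.support_cons]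
      exact List.mem_cons_of_mem _ q.start_mem_support)
    refine ⟨a, mem_core_of_adj haS hcS hadj', ?_⟩
    rw [degIn_def]
    have hfilter : S.filter (fun x => G.Adj a x) = {c} := by
      apply Finset.eq_singleton_iff_unique_mem.2
      refine ⟨Finset.mem_filter.2 ⟨hcS, hadj'⟩, ?_⟩
      intro x hx
      rw [Finset.mem_filter] at hx
      obtain ⟨hxS, hax⟩ := hx
      by_contra hxc
      by_cases hxs : x ∈ (Walk.cons hadj' q).support
      · have htu : ((Walk.cons hadj' q).takeUntil x hxs).IsPath := hp.takeUntil hxs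
        have hequ : (⟨(Walk.cons hadj' q).takeUntil x hxs, htu⟩ : G.Path a x)
            = SimpleGraph.Path.singleton hax :=
          SimpleGraph.isAcyclic_iff_path_unique.mp hac _ _
        have hwalk : (Walk.cons hadj' q).takeUntil x hxs
            = (SimpleGraph.Path.singleton hax).1 := congrArg Subtype.val hequ
        have hspec := (Walk.cons hadj' q).take_spec hxs
        rw [hwalk] at hspec
        have heq2 : Walk.cons hax ((Walk.cons hadj' q).dropUntil x hxs)
            = Walk.cons hadj' q := by
          simpa [SimpleGraph.Path.singleton, Walk.cons_append] using hspec
        have hgv : (Walk.cons hax ((Walk.cons hadj' q).dropUntil x hxs)).getVert (0 + 1)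
            = (Walk.cons hadj' q).getVert (0 + 1) := by rw [heq2]
        rw [Walk.getVert_cons_succ, Walk.getVert_cons_succ, Walk.getVert_zero,
          Walk.getVert_zero] at hgv
        exact hxc hgv
      · have hext : Q (n + 1) := by
          rw [hQ]
          refine ⟨x, b, Walk.cons hax.symm (Walk.cons hadj' q), hp.cons hxs, ?_, ?_⟩
          · intro y hy
            rw [Walk.support_cons] at hy
            rcases List.mem_cons.1 hy with rfl | hy
            · exact hxS
            · exact hsupp y hy
          · simp only [Walk.length_cons] at hlen ⊢
            omega
        have hlt : Nat.findGreatest Q (Fintype.card V) < n + 1 := by omega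
        exact Nat.findGreatest_is_greatest hlt (hbd (n + 1) hext).le hext
    rw [hfilter, Finset.card_singleton]

end ForestAuxNS

section ForestAuxNS2

open Finset SimpleGraph

variable {V : Type*} [Fintype V] {G : SimpleGraph V} {S : Finset V}

lemma step_phi (hns : ∀ v ∈ S, ∃ x ∈ S, G.Adj v x) {u w : V} (hu : u ∈ S)
    (hw : S.filter (fun x => G.Adj u x) = {w}) :
    phi G S ≤ ((isolSet G (S \ {u, w})).card : ℤ) + phi G (S \ {u, w}) := by
  classical
  set S' := S \ {u, w} with hS'
  have hwmem0 : w ∈ S.filter (fun x => G.Adj u x) := by rw [hw]; simp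
  have hadjuw : G.Adj u w := (Finset.mem_filter.1 hwmem0).2
  have hwS : w ∈ S := (Finset.mem_filter.1 hwmem0).1
  have huw : u ≠ w := hadjuw.ne
  have hdegu : degIn G S u = 1 := by rw [degIn_def, hw]; simp
  have hnbru : ∀ x ∈ S, G.Adj u x → x = w := by
    intro x hx hax
    have : x ∈ S.filter (fun y => G.Adj u y) := Finset.mem_filter.2 ⟨hx, hax⟩
    rw [hw] at this
    simpa using this
  have hsub : S' ⊆ S := Finset.sdiff_subset
  have hmemS' : ∀ x, x ∈ S' ↔ x ∈ S ∧ x ≠ u ∧ x ≠ w := by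
    intro x
    rw [hS', Finset.mem_sdiff, Finset.mem_insert, Finset.mem_singleton]
    tauto
  have hfilt : ∀ v : V, S'.filter (fun x => G.Adj v x)
      = (S.filter fun x => G.Adj v x) \ {u, w} := by
    intro v
    rw [hS']
    ext y
    simp only [Finset.mem_filter, Finset.mem_sdiff]
    tauto
  have hd1 : ∀ v ∈ S', ¬ G.Adj v w → degIn G S' v = degIn G S v := by
    intro v hv hnadj
    rw [degIn_def, degIn_def, hfilt]
    congr 1
    ext y
    simp only [Finset.mem_sdiff, Finset.mem_filter, Finset.mem_insert, Finset.mem_singleton]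
    constructor
    · rintro ⟨h, -⟩
      exact h
    · rintro ⟨hyS, hay⟩
      refine ⟨⟨hyS, hay⟩, ?_⟩
      rintro (rfl | rfl)
      · exact ((hmemS' v).1 hv).2.2 (hnbru v ((hmemS' v).1 hv).1 hay.symm)
      · exact hnadj hay
  have hd2 : ∀ v ∈ S', G.Adj v w → degIn G S' v + 1 = degIn G S v := by
    intro v hv hadj
    rw [degIn_def, degIn_def, hfilt]
    have hwmem : w ∈ S.filter (fun x => G.Adj v x) := Finset.mem_filter.2 ⟨hwS, hadj⟩
    have humem : u ∉ S.filter (fun x => G.Adj v x) := by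
      rw [Finset.mem_filter]
      rintro ⟨-, hvu⟩
      exact ((hmemS' v).1 hv).2.2 (hnbru v ((hmemS' v).1 hv).1 hvu.symm)
    have herase : (S.filter fun x => G.Adj v x) \ {u, w}
        = (S.filter fun x => G.Adj v x).erase w := by
      ext y
      simp only [Finset.mem_sdiff, Finset.mem_erase, Finset.mem_insert, Finset.mem_singleton]
      constructor
      · rintro ⟨hy, hn⟩
        push_neg at hn
        exact ⟨hn.2, hy⟩
      · rintro ⟨hyw, hy⟩
        refine ⟨hy, ?_⟩
        rintro (rfl | rfl)
        · exact humem hy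
        · exact hyw rfl
    rw [herase, Finset.card_erase_of_mem hwmem]
    have hpos : 1 ≤ (S.filter fun x => G.Adj v x).card := Finset.card_pos.2 ⟨w, hwmem⟩
    omega
  have hdegw1 : 1 ≤ degIn G S w := one_le_degIn (mem_core_of_adj hwS hu hadjuw.symm)
  rcases eq_or_lt_of_le hdegw1 with hcase | hcase
  · -- CASE A : degIn w = 1, the deleted pair is an isolated edge
    have hwnbr : S.filter (fun x => G.Adj w x) = {u} := by
      have hu' : u ∈ S.filter (fun x => G.Adj w x) := Finset.mem_filter.2 ⟨hu, hadjuw.symm⟩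
      exact huniqnbr hcase.symm hu hadjuw.symm
    have hnbrw : ∀ x ∈ S, G.Adj w x → x = u := by
      intro x hx hax
      have : x ∈ S.filter (fun y => G.Adj w y) := Finset.mem_filter.2 ⟨hx, hax⟩
      rw [hwnbr] at this
      simpa using this
    have hdeq : ∀ v ∈ S', degIn G S' v = degIn G S v := by
      intro v hv
      refine hd1 v hv fun hadj => ?_
      exact ((hmemS' v).1 hv).2.1 (hnbrw v ((hmemS' v).1 hv).1 hadj.symm)
    have hunp : u ∉ pSet G S := by
      rw [mem_pSet_iff]
      rintro ⟨-, -, x, hxS, hax, hdx⟩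
      have hxw := hnbru x hxS hax
      rw [hxw, ← hcase] at hdx
      omega
    have hwnp : w ∉ pSet G S := by
      rw [mem_pSet_iff]
      rintro ⟨-, -, x, hxS, hax, hdx⟩
      have hxu := hnbrw x hxS hax
      rw [hxu, hdegu] at hdx
      omega
    have hP : pSet G S' = pSet G S := by
      ext v
      rw [mem_pSet_iff, mem_pSet_iff]
      constructor
      · rintro ⟨hv, hdv, x, hx, hax, hdx⟩
        exact ⟨hsub hv, by rwa [hdeq v hv] at hdv, x, hsub hx, hax,
          by rwa [hdeq x hx] at hdx⟩
      · rintro ⟨hv, hdv, x, hx, hax, hdx⟩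
        have hvp : v ∈ pSet G S := mem_pSet_iff.2 ⟨hv, hdv, x, hx, hax, hdx⟩
        have hvu : v ≠ u := fun he => hunp (he ▸ hvp)
        have hvw : v ≠ w := fun he => hwnp (he ▸ hvp)
        have hvS' : v ∈ S' := (hmemS' v).2 ⟨hv, hvu, hvw⟩
        have hxu : x ≠ u := by
          intro he
          rw [he, hdegu] at hdx
          omega
        have hxw : x ≠ w := by
          intro he
          rw [he, ← hcase] at hdx
          omega
        have hxS' : x ∈ S' := (hmemS' x).2 ⟨hx, hxu, hxw⟩
        exact ⟨hvS', by rwa [hdeq v hvS'], x, hxS', hax, by rwa [hdeq x hxS']⟩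
    have hN : nSet G S' = nSet G S := by
      ext y
      rw [mem_nSet_iff, mem_nSet_iff, hP]
      constructor
      · rintro ⟨hy, v, hv, hadj⟩
        exact ⟨hsub hy, v, hv, hadj⟩
      · rintro ⟨hy, v, hv, hadj⟩
        have hvS : v ∈ S := (mem_pSet_iff.1 hv).1
        have hyu : y ≠ u := by
          rintro rfl
          exact hwnp ((hnbru v hvS hadj) ▸ hv)
        have hyw : y ≠ w := by
          rintro rfl
          exact hunp ((hnbrw v hvS hadj) ▸ hv)
        exact ⟨(hmemS' y).2 ⟨hy, hyu, hyw⟩, v, hv, hadj⟩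
    rw [phi, phi, hP, hN]
    have : (0:ℤ) ≤ ((isolSet G S').card : ℤ) := by positivity
    omega
  · -- CASE B : degIn w ≥ 2
    have hdegw2 : 2 ≤ degIn G S w := hcase
    have hup : u ∈ pSet G S := mem_pSet_iff.2 ⟨hu, hdegu, w, hwS, hadjuw, hdegw2⟩
    have hwn : w ∈ nSet G S := mem_nSet_iff.2 ⟨hwS, u, hup, hadjuw.symm⟩
    set A : Finset V := (S.filter fun x => G.Adj w x).erase u with hA
    have hmemA : ∀ x, x ∈ A ↔ x ≠ u ∧ x ∈ S ∧ G.Adj w x := by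
      intro x
      rw [hA, Finset.mem_erase, Finset.mem_filter]
    have hAS : A ⊆ S := fun x hx => ((hmemA x).1 hx).2.1
    have hwA : w ∉ A := fun hx => G.loopless.irrefl w ((hmemA w).1 hx).2.2
    have hAS' : A ⊆ S' := by
      intro x hx
      obtain ⟨hxu, hxS, hadj⟩ := (hmemA x).1 hx
      exact (hmemS' x).2 ⟨hxS, hxu, fun he => G.loopless.irrefl w (he ▸ hadj)⟩
    set II := A.filter (fun v => degIn G S v = 1) with hII
    set Bs := (pSet G S \ insert u A).filter
      (fun v => ∃ b ∈ A, G.Adj v b ∧ degIn G S b = 2) with hBs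
    set IVs := (pSet G S \ insert u A) \ Bs with hIVs
    have hIIP : ∀ v, v ∈ II ↔ v ∈ pSet G S ∧ v ∈ A := by
      intro v
      rw [hII, Finset.mem_filter]
      constructor
      · rintro ⟨hvA, hdv⟩
        obtain ⟨hvu, hvS, hadj⟩ := (hmemA v).1 hvA
        exact ⟨mem_pSet_iff.2 ⟨hvS, hdv, w, hwS, hadj.symm, hdegw2⟩, hvA⟩
      · rintro ⟨hvP, hvA⟩
        exact ⟨hvA, (mem_pSet_iff.1 hvP).2.1⟩
    have huA : u ∉ A := fun h => ((hmemA u).1 h).1 rfl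
    have huII : u ∉ II := fun h => huA ((hIIP u).1 h).2
    have hsub1 : insert u II ⊆ pSet G S := by
      intro x hx
      rcases Finset.mem_insert.1 hx with rfl | hx
      · exact hup
      · exact ((hIIP x).1 hx).1
    have hsd_eq : pSet G S \ insert u A = pSet G S \ insert u II := by
      ext v
      simp only [Finset.mem_sdiff, Finset.mem_insert, not_or]
      constructor
      · rintro ⟨hv, hvu, hvA⟩
        exact ⟨hv, hvu, fun hvII => hvA ((hIIP v).1 hvII).2⟩
      · rintro ⟨hv, hvu, hvII⟩
        exact ⟨hv, hvu, fun hvA => hvII ((hIIP v).2 ⟨hv, hvA⟩)⟩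
    have hcardP : (pSet G S).card = (pSet G S \ insert u A).card + II.card + 1 := by
      have h1 : (pSet G S \ insert u II).card + (insert u II).card = (pSet G S).card :=
        Finset.card_sdiff_add_card_eq_card hsub1
      have h2 : (insert u II).card = II.card + 1 := Finset.card_insert_of_notMem huII
      rw [hsd_eq]
      omega
    have hBsub : Bs ⊆ pSet G S \ insert u A := by
      rw [hBs]; exact Finset.filter_subset _ _
    have hBP : ∀ v ∈ Bs, v ∈ pSet G S := fun v hv => (Finset.mem_sdiff.1 (hBsub hv)).1
    have hcardBIV : (pSet G S \ insert u A).card = IVs.card + Bs.card := by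
      rw [hIVs]
      exact (Finset.card_sdiff_add_card_eq_card hBsub).symm
    have hPnw : ∀ v ∈ pSet G S, v ≠ w := by
      intro v hv he
      have := (mem_pSet_iff.1 hv).2.1
      rw [he] at this
      omega
    have hiso : isolSet G S' = II := by
      ext v
      rw [mem_isolSet_iff, hII, Finset.mem_filter]
      constructor
      · rintro ⟨hvS', hvi⟩
        obtain ⟨hvS, hvu, hvw⟩ := (hmemS' v).1 hvS'
        have hvnbr : ∀ y ∈ S, G.Adj v y → y = w := by
          intro y hy hady
          by_contra hyw
          have hyu : y ≠ u := fun he => hvw (hnbru v hvS (he ▸ hady).symm)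
          exact hvi y ((hmemS' y).2 ⟨hy, hyu, hyw⟩) hady
        have hadjvw : G.Adj v w := by
          obtain ⟨x, hx, hax⟩ := hns v hvS
          rwa [hvnbr x hx hax] at hax
        have hdv : degIn G S v = 1 := by
          rw [degIn_def]
          rw [show S.filter (fun x => G.Adj v x) = {w} from
            Finset.eq_singleton_iff_unique_mem.2
              ⟨Finset.mem_filter.2 ⟨hwS, hadjvw⟩,
               fun y hy => hvnbr y (Finset.mem_filter.1 hy).1 (Finset.mem_filter.1 hy).2⟩]
          exact Finset.card_singleton w
        exact ⟨(hmemA v).2 ⟨hvu, hvS, hadjvw.symm⟩, hdv⟩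
      · rintro ⟨hvA, hdv⟩
        obtain ⟨hvu, hvS, hadjwv⟩ := (hmemA v).1 hvA
        refine ⟨hAS' hvA, ?_⟩
        intro x hxS' hadjvx
        have hfv : S.filter (fun y => G.Adj v y) = {w} := huniqnbr hdv hwS hadjwv.symm
        have hxmem : x ∈ S.filter (fun y => G.Adj v y) :=
          Finset.mem_filter.2 ⟨hsub hxS', hadjvx⟩
        rw [hfv, Finset.mem_singleton] at hxmem
        exact ((hmemS' x).1 hxS').2.2 hxmem
    have hIVsub : IVs ⊆ pSet G S' := by
      intro v hv
      rw [hIVs, Finset.mem_sdiff, Finset.mem_sdiff, Finset.mem_insert, not_or] at hv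
      obtain ⟨⟨hvP, hvu, hvA⟩, hvB⟩ := hv
      obtain ⟨hvS, hdv, x, hxS, hax, hdx⟩ := mem_pSet_iff.1 hvP
      have hvw : v ≠ w := hPnw v hvP
      have hnadjvw : ¬ G.Adj v w := fun hadj => hvA ((hmemA v).2 ⟨hvu, hvS, hadj.symm⟩)
      have hvS' : v ∈ S' := (hmemS' v).2 ⟨hvS, hvu, hvw⟩
      have hdv' : degIn G S' v = 1 := by rw [hd1 v hvS' hnadjvw]; exact hdv
      have hxu : x ≠ u := by
        intro he
        rw [he, hdegu] at hdx
        omega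
      have hxw : x ≠ w := fun he => hnadjvw (he ▸ hax)
      have hxS' : x ∈ S' := (hmemS' x).2 ⟨hxS, hxu, hxw⟩
      have hdx' : 2 ≤ degIn G S' x := by
        by_cases hadjxw : G.Adj x w
        · have hxA : x ∈ A := (hmemA x).2 ⟨hxu, hxS, hadjxw.symm⟩
          have hdx2 : degIn G S x ≠ 2 := by
            intro h2
            refine hvB ?_
            rw [hBs, Finset.mem_filter]
            exact ⟨Finset.mem_sdiff.2 ⟨hvP, by
              rw [Finset.mem_insert]
              push_neg
              exact ⟨hvu, hvA⟩⟩, x, hxA, hax, h2⟩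
          have := hd2 x hxS' hadjxw
          omega
        · rw [hd1 x hxS' hadjxw]
          exact hdx
      exact mem_pSet_iff.2 ⟨hvS', hdv', x, hxS', hax, hdx'⟩
    -- neighbour function on Bs
    have hex : ∀ v ∈ Bs, ∃ b, b ∈ A ∧ G.Adj v b ∧ degIn G S b = 2 := by
      intro v hv
      rw [hBs, Finset.mem_filter] at hv
      obtain ⟨-, b, hb, h1, h2⟩ := hv
      exact ⟨b, hb, h1, h2⟩
    obtain ⟨nbF, hnbF⟩ : ∃ f : V → V, ∀ v ∈ Bs,
        f v ∈ A ∧ G.Adj v (f v) ∧ degIn G S (f v) = 2 := by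
      refine ⟨fun v => if h : ∃ b, b ∈ A ∧ G.Adj v b ∧ degIn G S b = 2 then h.choose else u,
        fun v hv => ?_⟩
      have h : ∃ b, b ∈ A ∧ G.Adj v b ∧ degIn G S b = 2 := hex v hv
      simp only [dif_pos h]
      exact h.choose_spec
    have hBv : ∀ v ∈ Bs, S.filter (fun y => G.Adj v y) = {nbF v} := by
      intro v hv
      obtain ⟨hbA, hadj, -⟩ := hnbF v hv
      exact huniqnbr (mem_pSet_iff.1 (hBP v hv)).2.1 (hAS hbA) hadj
    have hfib : ∀ v ∈ Bs, S.filter (fun y => G.Adj (nbF v) y) = {w, v} := by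
      intro v hv
      obtain ⟨hbA, hadj, hdb⟩ := hnbF v hv
      obtain ⟨hbu, hbS, hadjwb⟩ := (hmemA (nbF v)).1 hbA
      have hvS : v ∈ S := (mem_pSet_iff.1 (hBP v hv)).1
      have hvw : v ≠ w := hPnw v (hBP v hv)
      have hsub2 : ({w, v} : Finset V) ⊆ S.filter (fun y => G.Adj (nbF v) y) := by
        intro y hy
        rcases Finset.mem_insert.1 hy with rfl | hy
        · exact Finset.mem_filter.2 ⟨hwS, hadjwb.symm⟩
        · rw [Finset.mem_singleton] at hy
          subst hy
          exact Finset.mem_filter.2 ⟨hvS, hadj.symm⟩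
      have hc2 : ({w, v} : Finset V).card = 2 := by
        rw [Finset.card_insert_of_notMem (by simp [Ne.symm hvw]), Finset.card_singleton]
      refine (Finset.eq_of_subset_of_card_le hsub2 ?_).symm
      rw [hc2]
      rw [degIn_def] at hdb
      omega
    have hinj : Set.InjOn nbF Bs := by
      intro v1 h1 v2 h2 he
      have hkey : ({w, v1} : Finset V) = {w, v2} := by
        rw [← hfib v1 h1, ← hfib v2 h2, he]
      have hv1 : v1 ≠ w := hPnw v1 (hBP v1 h1)
      have : v1 ∈ ({w, v2} : Finset V) := by rw [← hkey]; simp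
      rcases Finset.mem_insert.1 this with h | h
      · exact absurd h hv1
      · simpa using h
    set NBw := insert w (Bs.image nbF) with hNBw
    have hwimg : w ∉ Bs.image nbF := by
      rw [Finset.mem_image]
      rintro ⟨v, hv, he⟩
      exact hwA (he ▸ (hnbF v hv).1)
    have hcardNBw : NBw.card = Bs.card + 1 := by
      rw [hNBw, Finset.card_insert_of_notMem hwimg, Finset.card_image_of_injOn hinj]
    have hNBwsub : NBw ⊆ nSet G S := by
      intro x hx
      rw [hNBw] at hx
      rcases Finset.mem_insert.1 hx with rfl | hx
      · exact hwn
      · obtain ⟨v, hv, rfl⟩ := Finset.mem_image.1 hx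
        obtain ⟨hbA, hadj, -⟩ := hnbF v hv
        exact mem_nSet_iff.2 ⟨hAS hbA, v, hBP v hv, hadj.symm⟩
    have hNBwN' : ∀ x ∈ NBw, x ∉ nSet G S' := by
      intro x hx hxN'
      have hxS' : x ∈ S' := (mem_nSet_iff.1 hxN').1
      rw [hNBw] at hx
      rcases Finset.mem_insert.1 hx with rfl | hx
      · exact ((hmemS' x).1 hxS').2.2 rfl
      · obtain ⟨v, hv, rfl⟩ := Finset.mem_image.1 hx
        obtain ⟨hbA, hadjvb, hdb⟩ := hnbF v hv
        obtain ⟨hbu, hbS, hadjwb⟩ := (hmemA (nbF v)).1 hbA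
        obtain ⟨-, q, hqP', hadjbq⟩ := mem_nSet_iff.1 hxN'
        have hqS' : q ∈ S' := (mem_pSet_iff.1 hqP').1
        have hq_mem : q ∈ S.filter (fun y => G.Adj (nbF v) y) :=
          Finset.mem_filter.2 ⟨hsub hqS', hadjbq⟩
        rw [hfib v hv] at hq_mem
        have hqv : q = v := by
          rcases Finset.mem_insert.1 hq_mem with h | h
          · exact absurd h ((hmemS' q).1 hqS').2.2
          · simpa using h
        subst hqv
        obtain ⟨hvS'2, hdv', r, hrS', hadjvr, hdr'⟩ := mem_pSet_iff.1 hqP'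
        have hr : r ∈ S.filter (fun y => G.Adj q y) :=
          Finset.mem_filter.2 ⟨hsub hrS', hadjvr⟩
        rw [hBv q hv] at hr
        rw [Finset.mem_singleton] at hr
        subst hr
        have hbS' : nbF q ∈ S' := hAS' hbA
        have hstep := hd2 (nbF q) hbS' hadjwb.symm
        omega
    obtain ⟨gF, hgF⟩ : ∃ g : V → V, ∀ x ∈ nSet G S',
        g x ∈ pSet G S' ∧ G.Adj x (g x) := by
      refine ⟨fun x => if h : ∃ q, q ∈ pSet G S' ∧ G.Adj x q then h.choose else u,
        fun x hx => ?_⟩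
      obtain ⟨-, q, hq, hadj⟩ := mem_nSet_iff.1 hx
      have h : ∃ q, q ∈ pSet G S' ∧ G.Adj x q := ⟨q, hq, hadj⟩
      simp only [dif_pos h]
      exact h.choose_spec
    have hcard2 : (nSet G S' \ nSet G S).card ≤ (pSet G S' \ IVs).card := by
      apply Finset.card_le_card_of_injOn gF
      · intro x hx
        rw [Finset.mem_coe, Finset.mem_sdiff] at hx
        obtain ⟨hxN', hxN⟩ := hx
        obtain ⟨hgP', hgadj⟩ := hgF x hxN'
        rw [Finset.mem_coe, Finset.mem_sdiff]
        refine ⟨hgP', fun hgIV => ?_⟩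
        rw [hIVs] at hgIV
        have hgX : gF x ∈ pSet G S \ insert u A := (Finset.mem_sdiff.1 hgIV).1
        have hgP : gF x ∈ pSet G S := (Finset.mem_sdiff.1 hgX).1
        exact hxN (mem_nSet_iff.2 ⟨hsub (mem_nSet_iff.1 hxN').1, gF x, hgP, hgadj⟩)
      · intro x1 h1 x2 h2 he
        rw [Finset.mem_coe, Finset.mem_sdiff] at h1 h2
        obtain ⟨hg1, hadj1⟩ := hgF x1 h1.1
        obtain ⟨hg2, hadj2⟩ := hgF x2 h2.1
        have hdq : degIn G S' (gF x1) = 1 := (mem_pSet_iff.1 hg1).2.1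
        rw [degIn_def] at hdq
        have h1' : x1 ∈ S'.filter (fun y => G.Adj (gF x1) y) :=
          Finset.mem_filter.2 ⟨(mem_nSet_iff.1 h1.1).1, hadj1.symm⟩
        have h2' : x2 ∈ S'.filter (fun y => G.Adj (gF x1) y) :=
          Finset.mem_filter.2 ⟨(mem_nSet_iff.1 h2.1).1, (he ▸ hadj2).symm⟩
        exact Finset.card_le_one.1 hdq.le x1 h1' x2 h2'
    have hNsplit : (nSet G S' ∩ nSet G S).card + (nSet G S' \ nSet G S).card
        = (nSet G S').card := Finset.card_inter_add_card_sdiff _ _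
    have hsubN : nSet G S' ∩ nSet G S ⊆ nSet G S \ NBw := by
      intro x hx
      rw [Finset.mem_inter] at hx
      exact Finset.mem_sdiff.2 ⟨hx.2, fun hxNB => hNBwN' x hxNB hx.1⟩
    have hcard3 : (nSet G S' ∩ nSet G S).card + NBw.card ≤ (nSet G S).card := by
      have ha := Finset.card_le_card hsubN
      have hb := Finset.card_sdiff_add_card_eq_card hNBwsub
      omega
    have hcard4 : (pSet G S' \ IVs).card + IVs.card = (pSet G S').card :=
      Finset.card_sdiff_add_card_eq_card hIVsub
    rw [phi, phi, hiso]
    omega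

end ForestAuxNS2

section ForestAuxNS3

open Finset SimpleGraph

variable {V : Type*} [Fintype V] {G : SimpleGraph V} {S : Finset V}

/-- choice of a minimum-degree (pendant) vertex. -/
noncomputable def pickLeaf [Nonempty V] (G : SimpleGraph V) (S : Finset V) : V :=
  if h : ∃ u ∈ core G S, degIn G S u = 1 then h.choose else Classical.arbitrary V

/-- one step of the δ-sequence. -/
noncomputable def nextS [Nonempty V] (G : SimpleGraph V) (S : Finset V) : Finset V :=
  (core G S).filter fun x => x ≠ pickLeaf G S ∧ ¬ G.Adj (pickLeaf G S) x

lemma step_struct [Nonempty V] (hac : G.IsAcyclic) (hne : S.Nonempty)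
    (hnt : ¬ Terminal G S) :
    ∃ w : V, pickLeaf G S ∈ core G S ∧ degIn G S (pickLeaf G S) = 1 ∧
      S.filter (fun x => G.Adj (pickLeaf G S) x) = {w} ∧
      nextS G S = core G S \ {pickLeaf G S, w} ∧
      (nextS G S).Nonempty ∧ (nextS G S).card + 2 ≤ S.card := by
  classical
  have hcne : (core G S).Nonempty := by
    rcases Finset.eq_empty_or_nonempty (core G S) with h | h
    · exact absurd (Or.inl ⟨h, hne⟩) hnt
    · exact h
  have h3 : 3 ≤ (core G S).card := by
    by_contra hlt
    push_neg at hlt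
    obtain ⟨v, hv⟩ := hcne
    obtain ⟨hvS, x, hxS, hadj⟩ := mem_core_iff.1 hv
    have hxc : x ∈ core G S := mem_core_of_adj hxS hvS hadj.symm
    have hvx : v ≠ x := hadj.ne
    have h2 : (core G S).card = 2 := by
      have hss : ({v, x} : Finset V) ⊆ core G S := by
        intro y hy
        rcases Finset.mem_insert.1 hy with rfl | hy
        · exact hv
        · rw [Finset.mem_singleton] at hy
          subst hy
          exact hxc
      have hc2 : ({v, x} : Finset V).card = 2 := by
        rw [Finset.card_insert_of_notMem (by simp [hvx]), Finset.card_singleton]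
      have := Finset.card_le_card hss
      omega
    obtain ⟨a, b, hab, habs⟩ := Finset.card_eq_two.1 h2
    apply hnt
    refine Or.inr ⟨by omega, ?_⟩
    have hamem : a ∈ core G S := by rw [habs]; simp
    have hbmem : b ∈ core G S := by rw [habs]; simp
    have hadj_ab : G.Adj a b := by
      obtain ⟨haS, y, hyS, hay⟩ := mem_core_iff.1 hamem
      have hyc : y ∈ core G S := mem_core_of_adj hyS haS hay.symm
      rw [habs, Finset.mem_insert, Finset.mem_singleton] at hyc
      rcases hyc with h | h
      · rw [h] at hay
        exact absurd hay (G.loopless.irrefl a)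
      · rwa [h] at hay
    intro y hy z hz hyz
    rw [habs, Finset.mem_insert, Finset.mem_singleton] at hy hz
    rcases hy with rfl | rfl <;> rcases hz with rfl | rfl
    · exact absurd rfl hyz
    · exact hadj_ab
    · exact hadj_ab.symm
    · exact absurd rfl hyz
  obtain ⟨u0, hu0c, hu0d⟩ := exists_leaf hac hcne
  have hpick : pickLeaf G S ∈ core G S ∧ degIn G S (pickLeaf G S) = 1 := by
    have h : ∃ u ∈ core G S, degIn G S u = 1 := ⟨u0, hu0c, hu0d⟩
    unfold pickLeaf
    rw [dif_pos h]
    exact h.choose_spec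
  obtain ⟨huc, hud⟩ := hpick
  have huS : pickLeaf G S ∈ S := core_subset huc
  have hud' : (S.filter (fun x => G.Adj (pickLeaf G S) x)).card = 1 := by
    rw [← degIn_def]; exact hud
  obtain ⟨w, hw⟩ := Finset.card_eq_one.1 hud'
  have hwmem : w ∈ S.filter (fun x => G.Adj (pickLeaf G S) x) := by rw [hw]; simp
  have hadjuw : G.Adj (pickLeaf G S) w := (Finset.mem_filter.1 hwmem).2
  have hwS : w ∈ S := (Finset.mem_filter.1 hwmem).1
  have hwc : w ∈ core G S := mem_core_of_adj hwS huS hadjuw.symm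
  have hnext : nextS G S = core G S \ {pickLeaf G S, w} := by
    unfold nextS
    ext x
    simp only [Finset.mem_filter, Finset.mem_sdiff, Finset.mem_insert, Finset.mem_singleton,
      not_or]
    constructor
    · rintro ⟨hxc, hxu, hnadj⟩
      exact ⟨hxc, hxu, fun he => hnadj (he ▸ hadjuw)⟩
    · rintro ⟨hxc, hxu, hxw⟩
      refine ⟨hxc, hxu, fun hadj => hxw ?_⟩
      have : x ∈ S.filter (fun y => G.Adj (pickLeaf G S) y) :=
        Finset.mem_filter.2 ⟨core_subset hxc, hadj⟩
      rw [hw] at this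
      simpa using this
  have hsubuw : ({pickLeaf G S, w} : Finset V) ⊆ core G S := by
    intro y hy
    rcases Finset.mem_insert.1 hy with rfl | hy
    · exact huc
    · rw [Finset.mem_singleton] at hy
      subst hy
      exact hwc
  have hcard_uw : ({pickLeaf G S, w} : Finset V).card = 2 := by
    rw [Finset.card_insert_of_notMem (by simp [hadjuw.ne]), Finset.card_singleton]
  have hcardnext : (nextS G S).card + 2 = (core G S).card := by
    rw [hnext, Finset.card_sdiff_of_subset hsubuw, hcard_uw]
    have := Finset.card_le_card hsubuw
    omega
  have hcsub := Finset.card_le_card (core_subset (G := G) (S := S))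
  refine ⟨w, huc, hud, hw, hnext, ?_, by omega⟩
  rw [← Finset.card_pos]
  omega

lemma pendSet_eq (G : SimpleGraph V) : pendSet G = pSet G Finset.univ := by
  ext v
  rw [mem_pSet_iff]
  unfold pendSet
  rw [Finset.mem_filter]
  constructor
  · rintro ⟨h0, h1, w, h2, h3⟩
    exact ⟨h0, h1, w, Finset.mem_univ w, h2, h3⟩
  · rintro ⟨h0, h1, w, -, h2, h3⟩
    exact ⟨h0, h1, w, h2, h3⟩

lemma nbrs_eq (G : SimpleGraph V) : nbrs G (pendSet G) = nSet G Finset.univ := by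
  ext x
  rw [mem_nSet_iff]
  unfold nbrs
  rw [Finset.mem_filter, pendSet_eq]

end ForestAuxNS3

/-- Let `T` be a forest without isolated vertices of order at least `3`, and let `P_T` be the
set of pendant vertices of `T` adjacent to a vertex of degree at least `2`. Then `T` has a
δ-sequence with `z̃ₛ(T) ≥ |P_T| - |N_T(P_T)|` and all `z̃ᵢ(T) ≥ 0` for `2 ≤ i ≤ s`. -/
theorem forest_deltaSeq {V : Type*} [Fintype V] (T : SimpleGraph V)
    (hforest : T.IsAcyclic) (hiso : ∀ v : V, ∃ w, T.Adj v w)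
    (hcard : 3 ≤ Fintype.card V) :
    ∃ D : DSeq T, D.IsDeltaSeq ∧
      ((pendSet T).card : ℤ) - ((nbrs T (pendSet T)).card : ℤ) ≤ D.z D.s ∧
      ∀ i, 2 ≤ i → i ≤ D.s → 0 ≤ D.z i := by
  classical
  haveI hNE : Nonempty V := Fintype.card_pos_iff.mp (by omega)
  set Sq : ℕ → Finset V := fun i => (nextS T)^[i - 1] Finset.univ with hSq
  have hSq1 : Sq 1 = Finset.univ := by simp [hSq]
  have hSqstep : ∀ i, 1 ≤ i → Sq (i + 1) = nextS T (Sq i) := by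
    intro i hi
    have he : i + 1 - 1 = (i - 1) + 1 := by omega
    simp only [hSq, he, Function.iterate_succ_apply']
  have hstop : ∃ n, Terminal T (Sq (n + 1)) := by
    by_contra hcon
    push_neg at hcon
    have key : ∀ n, (Sq (n + 1)).Nonempty ∧ (Sq (n + 1)).card + 2 * n ≤ Fintype.card V := by
      intro n
      induction n with
      | zero => exact ⟨hSq1 ▸ Finset.univ_nonempty, by rw [hSq1]; simp⟩
      | succ k ih =>
        obtain ⟨hne, hcd⟩ := ih
        obtain ⟨w, -, -, -, -, hne', hcd'⟩ := step_struct hforest hne (hcon k)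
        rw [hSqstep (k + 1) (by omega)]
        exact ⟨hne', by omega⟩
    obtain ⟨h1, h2⟩ := key (Fintype.card V)
    have := Finset.card_pos.2 h1
    omega
  set sv := Nat.find hstop + 1 with hsv
  have hsv1 : 1 ≤ sv := by omega
  have hterm : Terminal T (Sq sv) := Nat.find_spec hstop
  have hntm : ∀ i, 1 ≤ i → i < sv → ¬ Terminal T (Sq i) := by
    intro i h1 h2
    have h3 : i - 1 < Nat.find hstop := by omega
    have h4 := Nat.find_min hstop h3
    rwa [show i - 1 + 1 = i by omega] at h4
  have hne_aux : ∀ k, k + 1 ≤ sv → (Sq (k + 1)).Nonempty := by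
    intro k
    induction k with
    | zero => intro _; exact hSq1 ▸ Finset.univ_nonempty
    | succ m ih =>
      intro hm
      have hm1 : 1 ≤ m + 1 := by omega
      have hprev := ih (by omega)
      obtain ⟨w, -, -, -, -, hne', -⟩ :=
        step_struct hforest hprev (hntm (m + 1) hm1 (by omega))
      rw [hSqstep (m + 1) hm1]
      exact hne'
  have hne_all : ∀ i, 1 ≤ i → i ≤ sv → (Sq i).Nonempty := by
    intro i h1 h2
    have := hne_aux (i - 1) (by omega)
    rwa [show i - 1 + 1 = i by omega] at this
  set uf : ℕ → V := fun i => pickLeaf T (Sq i) with huf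
  have hmem_u : ∀ i, 1 ≤ i → i < sv → uf i ∈ core T (Sq i) := by
    intro i h1 h2
    obtain ⟨w, hc, -⟩ := step_struct hforest (hne_all i h1 h2.le) (hntm i h1 h2)
    exact hc
  have hstep_f : ∀ i, 1 ≤ i → i < sv →
      Sq (i + 1) = (core T (Sq i)).filter fun x => x ≠ uf i ∧ ¬ T.Adj (uf i) x := by
    intro i h1 h2
    rw [hSqstep i h1]
    rfl
  set D : DSeq T := ⟨sv, hsv1, Sq, uf, hSq1, hmem_u, hntm, hstep_f, hterm⟩ with hD
  have hDs : D.s = sv := rfl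
  have hDS : ∀ i, D.S i = Sq i := fun _ => rfl
  have hDu : ∀ i, D.u i = uf i := fun _ => rfl
  have hdelta : D.IsDeltaSeq := by
    intro i h1 h2 x hx
    obtain ⟨w, -, hud, -⟩ := step_struct hforest (hne_all i h1 h2.le) (hntm i h1 h2)
    have hgoal : degIn T (Sq i) (uf i) ≤ degIn T (Sq i) x := by
      rw [huf]
      rw [hud]
      exact one_le_degIn hx
    exact hgoal
  have hd_lt : ∀ i, 1 ≤ i → i < sv → D.d i = 1 := by
    intro i h1 h2
    obtain ⟨w, -, hdeg, -⟩ := step_struct hforest (hne_all i h1 h2.le) (hntm i h1 h2)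
    show (if i < D.s then degIn T (D.S i) (D.u i)
      else if h : (core T (D.S i)).Nonempty then (core T (D.S i)).inf' h (degIn T (D.S i))
        else 0) = 1
    rw [if_pos (show i < D.s from h2)]
    exact hdeg
  have hd_le : ∀ i, 2 ≤ i → i ≤ sv → D.d i ≤ 1 := by
    intro i h1 h2
    rcases lt_or_eq_of_le h2 with h | h
    · rw [hd_lt i (by omega) h]
    · subst h
      show (if sv < D.s then degIn T (D.S sv) (D.u sv)
        else if h : (core T (D.S sv)).Nonempty then (core T (D.S sv)).inf' h (degIn T (D.S sv))
          else 0) ≤ 1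
      rw [if_neg (lt_irrefl _)]
      by_cases hc : (core T (Sq sv)).Nonempty
      · rw [dif_pos hc]
        exact terminal_deg_le_one hforest hterm hc
      · rw [dif_neg hc]
        omega
  have hz_term : ∀ j, 2 ≤ j → j ≤ sv → (0:ℤ) ≤ (D.m j : ℤ) + 1 - (D.d j : ℤ) := by
    intro j h1 h2
    have hle : (D.d j : ℤ) ≤ 1 := by exact_mod_cast hd_le j h1 h2
    have hm0 : (0:ℤ) ≤ (D.m j : ℤ) := Int.natCast_nonneg _
    linarith
  have hz_nonneg : ∀ i, 2 ≤ i → i ≤ sv → 0 ≤ D.z i := by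
    intro i h1 h2
    rw [DSeq.z]
    apply Finset.sum_nonneg
    intro j hj
    rw [Finset.mem_Icc] at hj
    exact hz_term j hj.1 (le_trans hj.2 h2)
  have hz_succ : ∀ i, 1 ≤ i →
      D.z (i + 1) = D.z i + ((D.m (i + 1) : ℤ) + 1 - (D.d (i + 1) : ℤ)) := by
    intro i h1
    rw [DSeq.z, DSeq.z]
    exact Finset.sum_Icc_succ_top (by omega) _
  have main : ∀ k, ∀ i, 1 ≤ i → i ≤ sv → sv - i ≤ k → phi T (Sq i) ≤ D.z sv - D.z i := by
    intro k
    induction k with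
    | zero =>
      intro i h1 h2 h3
      have hi : i = sv := by omega
      subst hi
      rw [sub_self]
      exact phi_terminal hterm
    | succ k ih =>
      intro i h1 h2 h3
      rcases eq_or_lt_of_le h2 with h | hlt
      · subst h
        rw [sub_self]
        exact phi_terminal hterm
      · obtain ⟨w, huc, hud, hw, hnext, -, -⟩ :=
          step_struct hforest (hne_all i h1 hlt.le) (hntm i h1 hlt)
        have hns : ∀ v ∈ core T (Sq i), ∃ x ∈ core T (Sq i), T.Adj v x := by
          intro v hv
          obtain ⟨hvS, x, hxS, hadj⟩ := mem_core_iff.1 hv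
          exact ⟨x, mem_core_of_adj hxS hvS hadj.symm, hadj⟩
        have huS : pickLeaf T (Sq i) ∈ Sq i := core_subset huc
        have hwc : (core T (Sq i)).filter (fun x => T.Adj (pickLeaf T (Sq i)) x) = {w} := by
          rw [filter_adj_core huS]
          exact hw
        have hstep := step_phi hns huc hwc
        have hccore : core T (core T (Sq i)) = core T (Sq i) := by
          ext x
          rw [mem_core_iff]
          constructor
          · rintro ⟨hx, -⟩
            exact hx
          · intro hx
            obtain ⟨x', hx', hadj⟩ := hns x hx
            exact ⟨hx, x', hx', hadj⟩
        have hsdiff : core T (Sq i) \ {pickLeaf T (Sq i), w} = Sq (i + 1) := by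
          rw [hSqstep i h1, hnext]
        rw [hsdiff] at hstep
        have hphicore : phi T (core T (Sq i)) = phi T (Sq i) := phi_core
        rw [hphicore] at hstep
        have hih := ih (i + 1) (by omega) (by omega) (by omega)
        have hzs := hz_succ i h1
        have hdle : (D.d (i + 1) : ℤ) ≤ 1 := by
          exact_mod_cast hd_le (i + 1) (by omega) (by omega)
        have hmq : (D.m (i + 1) : ℤ) = ((isolSet T (Sq (i + 1))).card : ℤ) := rfl
        rw [← hmq] at hstep
        linarith
  have hmain1 := main sv 1 le_rfl hsv1 (by omega)
  have hz1 : D.z 1 = 0 := by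
    rw [DSeq.z, show Finset.Icc 2 1 = ∅ from Finset.Icc_eq_empty (by omega), Finset.sum_empty]
  rw [hSq1, hz1, sub_zero] at hmain1
  have hphi : phi T Finset.univ
      = ((pendSet T).card : ℤ) - ((nbrs T (pendSet T)).card : ℤ) := by
    rw [nbrs_eq, pendSet_eq]
    rfl
  refine ⟨D, hdelta, ?_, ?_⟩
  · rw [← hphi]
    exact hmain1
  · exact hz_nonneg
end
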